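/- arXiv:1109.5705 — 11 statements merged into one kernel-verified Lean document; each statement's English description precedes it below -/
import Mathlib

section
/- If P is a pairwise-locally strongly connected poset (for all x, y in P there is a closed interval containing both x and y which is strongly connected as a poset) and A, B are two distinct antichain cutsets of P, then A and B are disjoint. -/
/-- An antichain cutset: a set intersecting each maximal chain in exactly one element. -/
def IsAntichainCutset {α : Type*} [PartialOrder α] (A : Set α) : Prop :=
  ∀ c : Set α, IsMaxChain (· ≤ ·) c → ∃! x, x ∈ c ∧ x ∈ A

/-- A poset is strongly connected if any two maximal chains are connected by a finite
sequence of maximal chains in which consecutive chains have symmetric difference of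
cardinality two. -/
def StronglyConnectedOrder (α : Type*) [PartialOrder α] : Prop :=
  ∀ c d : Set α, IsMaxChain (· ≤ ·) c → IsMaxChain (· ≤ ·) d →
    ∃ (n : ℕ) (f : ℕ → Set α), f 0 = c ∧ f n = d ∧
      (∀ i ≤ n, IsMaxChain (· ≤ ·) (f i)) ∧
      ∀ i < n, (symmDiff (f i) (f (i + 1))).ncard = 2

/-!
Suppose `p ∈ A ∩ B` and `q ∈ A`, and let `[a, b]` be a strongly connected interval containing
both. Fix a maximal chain `c` through `a` and `b`. Replacing the part of `c` inside `[a, b]` by a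
maximal chain of `[a, b]` gives a maximal chain of `P`, so a sequence of maximal chains of `[a, b]`
from one through `p` to one through `q` becomes a sequence of maximal chains of `P` whose
consecutive symmetric differences have two elements. Meeting `A ∩ B` survives each such step: if
the common point `x` is dropped, the points of `A` and of `B` on the new chain are both new, and
there is only one new element. So the last chain meets `A ∩ B`, and its point of `A` is `q`.
Hence `A ⊆ B`, and symmetrically `B ⊆ A`.
-/

open Set

def PairwiseLocallyStronglyConnected (α : Type*) [PartialOrder α] : Prop :=
  ∀ x y : α, ∃ a b : α, x ∈ Icc a b ∧ y ∈ Icc a b ∧ StronglyConnectedOrder (Icc a b)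

section

variable {α : Type*} [PartialOrder α]

theorem IsMaxChain.mem_of_forall_le_or_ge {s : Set α} {z : α} (hs : IsMaxChain (· ≤ ·) s)
    (h : ∀ w ∈ s, z ≤ w ∨ w ≤ z) : z ∈ s :=
  (Flag.ofIsMaxChain s hs).mem_iff_forall_le_or_ge.2 fun w hw => h w hw

theorem isMaxChain_of_forall_le_or_ge {s : Set α} (hs : IsChain (· ≤ ·) s)
    (h : ∀ z, (∀ w ∈ s, z ≤ w ∨ w ≤ z) → z ∈ s) : IsMaxChain (· ≤ ·) s := by
  refine ⟨hs, fun t ht hst => hst.antisymm fun z hz => h z fun w hw => ?_⟩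
  obtain rfl | hne := eq_or_ne z w
  · exact Or.inl le_rfl
  · exact ht hz (hst hw) hne

theorem le_or_ge_of_notMem_Icc {a b z w : α} (ha : z ≤ a ∨ a ≤ z) (hb : z ≤ b ∨ b ≤ z)
    (hz : z ∉ Icc a b) (hw : w ∈ Icc a b) : z ≤ w ∨ w ≤ z := by
  by_cases hza : z ≤ a
  · exact Or.inl (hza.trans hw.1)
  · have hbz : b ≤ z := hb.resolve_left fun hzb => hz ⟨ha.resolve_left hza, hzb⟩
    exact Or.inr (hw.2.trans hbz)

section Splice

variable {a b : α}

def spliceIcc (c : Set α) (m : Set (Icc a b)) : Set α :=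
  c \ Icc a b ∪ Subtype.val '' m

theorem mem_spliceIcc_of_mem {c : Set α} {m : Set (Icc a b)} {x : Icc a b} (hx : x ∈ m) :
    (x : α) ∈ spliceIcc c m :=
  Or.inr (mem_image_of_mem _ hx)

theorem symmDiff_spliceIcc_subset (c : Set α) (m m' : Set (Icc a b)) :
    symmDiff (spliceIcc c m) (spliceIcc c m') ⊆ Subtype.val '' symmDiff m m' := by
  rw [image_symmDiff Subtype.val_injective]
  intro z hz
  simp only [spliceIcc, mem_symmDiff, mem_union, mem_sdiff] at hz ⊢
  tauto

theorem isMaxChain_spliceIcc {c : Set α} {m : Set (Icc a b)} (hab : a ≤ b)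
    (hc : IsMaxChain (· ≤ ·) c) (ha : a ∈ c) (hb : b ∈ c) (hm : IsMaxChain (· ≤ ·) m) :
    IsMaxChain (· ≤ ·) (spliceIcc c m) := by
  have haM : a ∈ spliceIcc c m := mem_spliceIcc_of_mem (x := ⟨a, le_rfl, hab⟩)
    (hm.mem_of_forall_le_or_ge fun y _ => Or.inl y.2.1)
  have hbM : b ∈ spliceIcc c m := mem_spliceIcc_of_mem (x := ⟨b, hab, le_rfl⟩)
    (hm.mem_of_forall_le_or_ge fun y _ => Or.inr y.2.2)
  have houter : ∀ z ∈ c \ Icc a b, ∀ w ∈ Icc a b, z ≤ w ∨ w ≤ z := fun z hz w hw =>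
    le_or_ge_of_notMem_Icc (hc.isChain.total hz.1 ha) (hc.isChain.total hz.1 hb) hz.2 hw
  refine isMaxChain_of_forall_le_or_ge ?_ fun z hz => ?_
  · refine isChain_union.2 ⟨hc.isChain.mono sdiff_subset,
      hm.isChain.image (OrderEmbedding.subtype _), ?_⟩
    rintro z hz _ ⟨w, -, rfl⟩ -
    exact houter z hz w w.2
  by_cases hzI : z ∈ Icc a b
  · exact mem_spliceIcc_of_mem (x := ⟨z, hzI⟩)
      (hm.mem_of_forall_le_or_ge fun y hy => hz y (mem_spliceIcc_of_mem hy))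
  have hzc : z ∈ c := hc.mem_of_forall_le_or_ge fun w hw => by
    by_cases hwI : w ∈ Icc a b
    · exact le_or_ge_of_notMem_Icc (hz a haM) (hz b hbM) hzI hwI
    · exact hz w (Or.inl ⟨hw, hwI⟩)
  exact Or.inl ⟨hzc, hzI⟩

end Splice

namespace IsAntichainCutset

theorem eq_of_mem {A c : Set α} (hA : IsAntichainCutset A) (hc : IsMaxChain (· ≤ ·) c)
    {x y : α} (hx : x ∈ c ∩ A) (hy : y ∈ c ∩ A) : x = y :=
  (hA c hc).unique hx hy

theorem inter_nonempty_of_symmDiff_subset_pair {A B s t : Set α} {u v : α}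
    (hA : IsAntichainCutset A) (hB : IsAntichainCutset B) (hs : IsMaxChain (· ≤ ·) s)
    (ht : IsMaxChain (· ≤ ·) t) (hst : symmDiff s t ⊆ {u, v})
    (hsAB : (s ∩ (A ∩ B)).Nonempty) : (t ∩ (A ∩ B)).Nonempty := by
  obtain ⟨x, hxs, hxA, hxB⟩ := hsAB
  by_cases hxt : x ∈ t
  · exact ⟨x, hxt, hxA, hxB⟩
  obtain ⟨y, ⟨hyt, hyA⟩, -⟩ := hA t ht
  obtain ⟨z, ⟨hzt, hzB⟩, -⟩ := hB t ht
  have hys : y ∉ s := fun hys => hxt (hA.eq_of_mem hs ⟨hys, hyA⟩ ⟨hxs, hxA⟩ ▸ hyt)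
  have hzs : z ∉ s := fun hzs => hxt (hB.eq_of_mem hs ⟨hzs, hzB⟩ ⟨hxs, hxB⟩ ▸ hzt)
  have hx : x ∈ ({u, v} : Set α) := hst (Or.inl ⟨hxs, hxt⟩)
  have hy : y ∈ ({u, v} : Set α) := hst (Or.inr ⟨hyt, hys⟩)
  have hz : z ∈ ({u, v} : Set α) := hst (Or.inr ⟨hzt, hzs⟩)
  have hyz : y = z := by
    have hxy : x ≠ y := ne_of_mem_of_not_mem hxs hys
    have hxz : x ≠ z := ne_of_mem_of_not_mem hxs hzs
    simp only [mem_insert_iff, mem_singleton_iff] at hx hy hz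
    grind
  exact ⟨y, hyt, hyA, hyz ▸ hzB⟩

theorem inter_nonempty_of_chain_sequence {A B : Set α} (hA : IsAntichainCutset A)
    (hB : IsAntichainCutset B) {n : ℕ} {f : ℕ → Set α}
    (hf : ∀ i ≤ n, IsMaxChain (· ≤ ·) (f i))
    (hstep : ∀ i < n, ∃ u v, symmDiff (f i) (f (i + 1)) ⊆ {u, v})
    (h0 : (f 0 ∩ (A ∩ B)).Nonempty) : (f n ∩ (A ∩ B)).Nonempty := by
  suffices ∀ i ≤ n, (f i ∩ (A ∩ B)).Nonempty from this n le_rfl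
  intro i hi
  induction i with
  | zero => exact h0
  | succ i ih =>
    obtain ⟨u, v, huv⟩ := hstep i hi
    have hi' : i ≤ n := Nat.le_of_succ_le hi
    exact hA.inter_nonempty_of_symmDiff_subset_pair hB (hf i hi') (hf _ hi) huv (ih hi')

theorem subset_of_mem_inter (h : PairwiseLocallyStronglyConnected α) {A B : Set α} {p : α}
    (hA : IsAntichainCutset A) (hB : IsAntichainCutset B) (hp : p ∈ A ∩ B) : A ⊆ B := by
  intro q hqA
  obtain ⟨a, b, hpI, hqI, hI⟩ := h p q
  have hab : a ≤ b := hpI.1.trans hpI.2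
  obtain ⟨c, hac, hbc⟩ := Flag.exists_mem_mem hab
  obtain ⟨mp, hpm⟩ := Flag.exists_mem (⟨p, hpI⟩ : Icc a b)
  obtain ⟨mq, hqm⟩ := Flag.exists_mem (⟨q, hqI⟩ : Icc a b)
  obtain ⟨n, f, hf0, hfn, hf, hstep⟩ := hI mp mq mp.maxChain mq.maxChain
  have hsplice : ∀ i ≤ n, IsMaxChain (· ≤ ·) (spliceIcc c (f i)) := fun i hi =>
    isMaxChain_spliceIcc hab c.maxChain hac hbc (hf i hi)
  have hsplice_step : ∀ i < n,
      ∃ u v, symmDiff (spliceIcc c (f i)) (spliceIcc c (f (i + 1))) ⊆ {u, v} := by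
    intro i hi
    obtain ⟨u, v, -, huv⟩ := ncard_eq_two.1 (hstep i hi)
    refine ⟨u, v, (symmDiff_spliceIcc_subset _ _ _).trans ?_⟩
    rw [huv, image_pair]
  have hp0 : p ∈ spliceIcc c (f 0) := mem_spliceIcc_of_mem (x := ⟨p, hpI⟩) (by rwa [hf0])
  have hqn : q ∈ spliceIcc c (f n) := mem_spliceIcc_of_mem (x := ⟨q, hqI⟩) (by rwa [hfn])
  obtain ⟨x, hx, hxA, hxB⟩ :=
    hA.inter_nonempty_of_chain_sequence hB hsplice hsplice_step ⟨p, hp0, hp⟩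
  obtain rfl : x = q := hA.eq_of_mem (hsplice n le_rfl) ⟨hx, hxA⟩ ⟨hqn, hqA⟩
  exact hxB

end IsAntichainCutset

end

/-- If P is pairwise-locally strongly connected, distinct antichain cutsets are disjoint. -/
theorem antichain_cutsets_disjoint_of_pairwiseLocally {α : Type*} [PartialOrder α]
    (h : ∀ x y : α, ∃ a b : α, x ∈ Set.Icc a b ∧ y ∈ Set.Icc a b ∧
      StronglyConnectedOrder (Set.Icc a b))
    {A B : Set α} (hA : IsAntichainCutset A) (hB : IsAntichainCutset B)
    (hAB : A ≠ B) : Disjoint A B :=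
  disjoint_left.2 fun _ hpA hpB => hAB <|
    (hA.subset_of_mem_inter h hB ⟨hpA, hpB⟩).antisymm
      (hB.subset_of_mem_inter h hA ⟨hpB, hpA⟩)
end

section
/- If m and n are maximal chains in a strongly connected poset P, then the set differences m \ n and n \ m are finite and have the same cardinality. -/
namespace Set

variable {α : Type*}

theorem encard_diff_add_encard_diff_add_encard_diff (a b c : Set α) :
    (a \ b).encard + (b \ c).encard + (c \ a).encard = ((a ∪ b ∪ c) \ (a ∩ b ∩ c)).encard := by
  have hab_bc : Disjoint (a \ b) (b \ c) := disjoint_sdiff_left.mono_right sdiff_subset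
  have hca : Disjoint (a \ b ∪ b \ c) (c \ a) :=
    disjoint_union_left.2 ⟨disjoint_sdiff_right.mono_left sdiff_subset,
      disjoint_sdiff_left.mono_right sdiff_subset⟩
  rw [← encard_union_eq hab_bc, ← encard_union_eq hca]
  congr 1
  ext x
  simp only [mem_union, mem_sdiff, mem_inter_iff]
  tauto

theorem encard_diff_add_encard_diff_add_encard_diff_comm (a b c : Set α) :
    (a \ b).encard + (b \ c).encard + (c \ a).encard =
      (a \ c).encard + (c \ b).encard + (b \ a).encard := by
  rw [encard_diff_add_encard_diff_add_encard_diff, encard_diff_add_encard_diff_add_encard_diff,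
    union_right_comm, inter_right_comm]

def BalancedDiff (a b : Set α) : Prop :=
  (a \ b).Finite ∧ (b \ a).Finite ∧ (a \ b).ncard = (b \ a).ncard

theorem balancedDiff_refl (a : Set α) : BalancedDiff a a := by
  simp [BalancedDiff]

theorem BalancedDiff.trans {a b c : Set α} (hab : BalancedDiff a b) (hbc : BalancedDiff b c) :
    BalancedDiff a c := by
  obtain ⟨fab, fba, hab⟩ := hab
  obtain ⟨fbc, fcb, hbc⟩ := hbc
  have fac : (a \ c).Finite := (fab.union fbc).subset (sdiff_triangle a b c)
  have fca : (c \ a).Finite := (fcb.union fba).subset (sdiff_triangle c b a)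
  have hcycle := encard_diff_add_encard_diff_add_encard_diff_comm a b c
  rw [← fab.cast_ncard_eq, ← fba.cast_ncard_eq, ← fbc.cast_ncard_eq, ← fcb.cast_ncard_eq,
    ← fac.cast_ncard_eq, ← fca.cast_ncard_eq] at hcycle
  exact ⟨fac, fca, by norm_cast at hcycle; omega⟩

instance : Std.Refl (BalancedDiff (α := α)) := ⟨balancedDiff_refl⟩

instance : IsTrans (Set α) BalancedDiff := ⟨fun _ _ _ => BalancedDiff.trans⟩

theorem balancedDiff_of_symmDiff_ncard_eq_two {a b : Set α} (hab : ¬a ⊆ b) (hba : ¬b ⊆ a)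
    (h : (symmDiff a b).ncard = 2) : BalancedDiff a b := by
  rw [Set.symmDiff_def] at h
  have hfin : (a \ b ∪ b \ a).Finite := finite_of_ncard_ne_zero (by omega)
  have fab : (a \ b).Finite := hfin.subset subset_union_left
  have fba : (b \ a).Finite := hfin.subset subset_union_right
  rw [ncard_union_eq disjoint_sdiff_sdiff fab fba] at h
  have pab := (ncard_pos fab).2 (sdiff_nonempty.2 hab)
  have pba := (ncard_pos fba).2 (sdiff_nonempty.2 hba)
  exact ⟨fab, fba, by omega⟩

end Set

open Set in
theorem IsMaxChain.balancedDiff_of_symmDiff_ncard_eq_two {α : Type*} {r : α → α → Prop}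
    {a b : Set α} (ha : IsMaxChain r a) (hb : IsMaxChain r b)
    (h : (symmDiff a b).ncard = 2) : BalancedDiff a b := by
  have hne : a ≠ b := by
    rintro rfl
    simp at h
  exact Set.balancedDiff_of_symmDiff_ncard_eq_two (fun hab => hne (ha.2 hb.1 hab))
    (fun hba => hne (hb.2 ha.1 hba).symm) h

open Set Relation in
/-- In a strongly connected poset, m \ n and n \ m are finite of the same cardinality
for maximal chains m, n. -/
theorem maxChain_diff_finite_same_card {α : Type*} [PartialOrder α]
    (h : StronglyConnectedOrder α) {m n : Set α}
    (hm : IsMaxChain (· ≤ ·) m) (hn : IsMaxChain (· ≤ ·) n) :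
    (m \ n).Finite ∧ (n \ m).Finite ∧ (m \ n).ncard = (n \ m).ncard := by
  obtain ⟨N, f, rfl, rfl, hmax, hstep⟩ := h m n hm hn
  have hbalanced : ∀ i ∈ Ico 0 N, BalancedDiff (f i) (f (Order.succ i)) := fun i hi =>
    (hmax i hi.2.le).balancedDiff_of_symmDiff_ncard_eq_two (hmax (i + 1) hi.2) (hstep i hi.2)
  have hpath : ReflTransGen BalancedDiff (f 0) (f N) :=
    ReflTransGen.lift f le_rfl _ _
      (reflTransGen_of_succ_of_le (fun i j => BalancedDiff (f i) (f j)) hbalanced N.zero_le)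
  rwa [reflTransGen_eq_self] at hpath
end

section
/- In a discrete poset that is strongly connected, every closed interval is graded of finite height, i.e., all maximal chains of each interval are finite and of the same length. -/
/-- A poset is discrete if every closed interval has a maximal chain of finite length. -/
def DiscretePoset (α : Type*) [PartialOrder α] : Prop :=
  ∀ a b : α, a ≤ b → ∃ c : Set (Set.Icc a b), IsMaxChain (· ≤ ·) c ∧ c.Finite

/-!
Fix a maximal chain `C` of the whole poset through `a` and `b`. Replacing `C ∩ [a, b]` by any
maximal chain of `[a, b]` again gives a maximal chain, so two maximal chains `c, d` of `[a, b]`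
yield maximal chains of the poset that agree outside `[a, b]`. Strong connectivity links these by
a sequence of steps, each exchanging one element for one other, so `c \ d` and `d \ c` are finite
of equal size; as the discrete interval has a finite maximal chain, all its maximal chains are
finite of that same size.
-/

open Set

namespace Set

variable {α : Type*}

-- The finiteness conjunct matters: `ncard` of an infinite set is `0`.
def BalancedSymmDiff (C D : Set α) : Prop :=
  (symmDiff C D).Finite ∧ (C \ D).ncard = (D \ C).ncard

lemma balancedSymmDiff_iff_ncard_inter {C D S : Set α} (hS : S.Finite) (hCD : symmDiff C D ⊆ S) :
    BalancedSymmDiff C D ↔ (C ∩ S).ncard = (D ∩ S).ncard := by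
  have hdiff : ∀ {U V : Set α}, U \ V ⊆ S → U \ V = (U ∩ S) \ (V ∩ S) := fun hUV => by
    ext z; have := @hUV z; simp only [mem_sdiff, mem_inter_iff] at this ⊢; tauto
  rw [BalancedSymmDiff, ncard_eq_ncard_iff_ncard_sdiff_eq_ncard_sdiff (hS.inter_of_right C)
    (hS.inter_of_right D), ← hdiff (subset_union_left.trans hCD),
    ← hdiff (subset_union_right.trans hCD)]
  exact and_iff_right (hS.subset hCD)

lemma BalancedSymmDiff.refl (C : Set α) : BalancedSymmDiff C C := by
  simp [BalancedSymmDiff]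

lemma BalancedSymmDiff.trans {C D E : Set α} (h₁ : BalancedSymmDiff C D)
    (h₂ : BalancedSymmDiff D E) : BalancedSymmDiff C E := by
  have hS := h₁.1.union h₂.1
  have hCE : symmDiff C E ⊆ symmDiff C D ∪ symmDiff D E := symmDiff_triangle C D E
  rw [balancedSymmDiff_iff_ncard_inter hS subset_union_left] at h₁
  rw [balancedSymmDiff_iff_ncard_inter hS subset_union_right] at h₂
  rw [balancedSymmDiff_iff_ncard_inter hS hCE]
  exact h₁.trans h₂

lemma BalancedSymmDiff.of_union {X Y E : Set α} (h : BalancedSymmDiff (X ∪ E) (Y ∪ E))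
    (hX : Disjoint X E) (hY : Disjoint Y E) : BalancedSymmDiff X Y := by
  have key : ∀ {U V : Set α}, Disjoint U E → (U ∪ E) \ (V ∪ E) = U \ V := fun hU => by
    ext z; have := @disjoint_left.mp hU z; simp only [mem_sdiff, mem_union]; tauto
  unfold BalancedSymmDiff at h ⊢
  rw [Set.symmDiff_def, key hX, key hY] at h
  rwa [Set.symmDiff_def]

lemma BalancedSymmDiff.finite_and_ncard_eq {C D : Set α} (h : BalancedSymmDiff C D)
    (hC : C.Finite) : D.Finite ∧ D.ncard = C.ncard := by
  have hD : D.Finite := (hC.union h.1).subset fun z hz => by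
    by_cases hzC : z ∈ C
    · exact Or.inl hzC
    · exact Or.inr (Or.inr ⟨hz, hzC⟩)
  exact ⟨hD, ((ncard_eq_ncard_iff_ncard_sdiff_eq_ncard_sdiff hC hD).mpr h.2).symm⟩

end Set

section Chains

variable {α : Type*}

lemma isMaxChain_iff_forall_comparable_mem [Preorder α] {s : Set α} :
    IsMaxChain (· ≤ ·) s ↔
      IsChain (· ≤ ·) s ∧ ∀ x, (∀ y ∈ s, x ≤ y ∨ y ≤ x) → x ∈ s := by
  refine ⟨fun hs => ⟨hs.1, fun x hx => ?_⟩, fun ⟨hs, hmem⟩ => ⟨hs, fun t ht hst => ?_⟩⟩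
  · rw [hs.2 (hs.1.insert fun y hy _ => hx y hy) (subset_insert x s)]
    exact mem_insert x s
  · exact hst.antisymm fun x hx => hmem x fun y hy => ht.total hx (hst hy)

lemma IsMaxChain.mem_of_forall_comparable [Preorder α] {s : Set α} (hs : IsMaxChain (· ≤ ·) s)
    {x : α} (hx : ∀ y ∈ s, x ≤ y ∨ y ≤ x) : x ∈ s :=
  (isMaxChain_iff_forall_comparable_mem.mp hs).2 x hx

lemma IsMaxChain.left_mem_image_val_Icc [Preorder α] {a b : α} (hab : a ≤ b)
    {d : Set (Icc a b)} (hd : IsMaxChain (· ≤ ·) d) : a ∈ Subtype.val '' d :=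
  ⟨⟨a, left_mem_Icc.mpr hab⟩, hd.mem_of_forall_comparable fun y _ => Or.inl y.2.1, rfl⟩

lemma IsMaxChain.right_mem_image_val_Icc [Preorder α] {a b : α} (hab : a ≤ b)
    {d : Set (Icc a b)} (hd : IsMaxChain (· ≤ ·) d) : b ∈ Subtype.val '' d :=
  ⟨⟨b, right_mem_Icc.mpr hab⟩, hd.mem_of_forall_comparable fun y _ => Or.inr y.2.2, rfl⟩

lemma comparable_of_notMem_Icc [Preorder α] {a b x y : α} (hxa : x ≤ a ∨ a ≤ x)
    (hxb : x ≤ b ∨ b ≤ x) (hx : x ∉ Icc a b) (hy : y ∈ Icc a b) : x ≤ y ∨ y ≤ x := by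
  rcases hxa with hxa | hax
  · exact Or.inl (hxa.trans hy.1)
  · rcases hxb with hxb | hbx
    · exact absurd ⟨hax, hxb⟩ hx
    · exact Or.inr (hy.2.trans hbx)

lemma IsMaxChain.image_val_union_diff_Icc [PartialOrder α] {C : Set α} (hC : IsMaxChain (· ≤ ·) C)
    {a b : α} (ha : a ∈ C) (hb : b ∈ C) (hab : a ≤ b) {d : Set (Icc a b)}
    (hd : IsMaxChain (· ≤ ·) d) : IsMaxChain (· ≤ ·) (Subtype.val '' d ∪ (C \ Icc a b)) := by
  have hCI : ∀ x ∈ C \ Icc a b, ∀ y ∈ Icc a b, x ≤ y ∨ y ≤ x := fun x hx _ hy =>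
    comparable_of_notMem_Icc (hC.1.total hx.1 ha) (hC.1.total hx.1 hb) hx.2 hy
  refine isMaxChain_iff_forall_comparable_mem.mpr ⟨isChain_union.mpr ⟨?_, ?_, ?_⟩, ?_⟩
  · exact Subtype.mono_coe _ |>.isChain_image hd.1
  · exact hC.1.mono sdiff_subset
  · rintro _ ⟨y, -, rfl⟩ x hx -
    exact (hCI x hx y y.2).symm
  · intro x hx
    by_cases hxI : x ∈ Icc a b
    · refine Or.inl ⟨⟨x, hxI⟩, hd.mem_of_forall_comparable fun y hy => ?_, rfl⟩
      exact hx y (Or.inl ⟨y, hy, rfl⟩)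
    · have hxa := hx a (Or.inl (hd.left_mem_image_val_Icc hab))
      have hxb := hx b (Or.inl (hd.right_mem_image_val_Icc hab))
      refine Or.inr ⟨hC.mem_of_forall_comparable fun y hy => ?_, hxI⟩
      by_cases hyI : y ∈ Icc a b
      · exact comparable_of_notMem_Icc hxa hxb hxI hyI
      · exact hx y (Or.inr ⟨hy, hyI⟩)

end Chains

section StronglyConnected

variable {α : Type*} [PartialOrder α]

lemma IsMaxChain.balancedSymmDiff_of_ncard_symmDiff_eq_two {F G : Set α}
    (hF : IsMaxChain (· ≤ ·) F) (hG : IsMaxChain (· ≤ ·) G) (h : (symmDiff F G).ncard = 2) :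
    BalancedSymmDiff F G := by
  have hfin : (symmDiff F G).Finite := finite_of_ncard_ne_zero (by omega)
  have hne : F ≠ G := by
    rintro rfl
    simp at h
  have hFG : 0 < (F \ G).ncard :=
    (ncard_pos (hfin.subset subset_union_left)).mpr
      (sdiff_nonempty.mpr fun hsub => hne (hF.2 hG.1 hsub))
  have hGF : 0 < (G \ F).ncard :=
    (ncard_pos (hfin.subset subset_union_right)).mpr
      (sdiff_nonempty.mpr fun hsub => hne (hG.2 hF.1 hsub).symm)
  have hsum : (F \ G).ncard + (G \ F).ncard = 2 := by
    rw [← h, Set.symmDiff_def, ncard_union_eq disjoint_sdiff_sdiff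
      (hfin.subset subset_union_left) (hfin.subset subset_union_right)]
  exact ⟨hfin, by omega⟩

lemma StronglyConnectedOrder.balancedSymmDiff (hsc : StronglyConnectedOrder α) {C D : Set α}
    (hC : IsMaxChain (· ≤ ·) C) (hD : IsMaxChain (· ≤ ·) D) : BalancedSymmDiff C D := by
  obtain ⟨n, f, rfl, rfl, hmax, hstep⟩ := hsc C D hC hD
  suffices ∀ i ≤ n, BalancedSymmDiff (f 0) (f i) from this n le_rfl
  intro i
  induction i with
  | zero => exact fun _ => BalancedSymmDiff.refl _
  | succ i ih =>
    intro hi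
    exact (ih (by omega)).trans <| (hmax i (by omega)).balancedSymmDiff_of_ncard_symmDiff_eq_two
      (hmax (i + 1) hi) (hstep i hi)

end StronglyConnected

/-- In a discrete strongly connected poset, every closed interval is graded of finite
height: all maximal chains of the interval are finite and of the same cardinality. -/
theorem discrete_stronglyConnected_intervals_graded {α : Type*} [PartialOrder α]
    (hd : DiscretePoset α) (hsc : StronglyConnectedOrder α) :
    ∀ a b : α, a ≤ b → ∃ k : ℕ, ∀ c : Set (Set.Icc a b),
      IsMaxChain (· ≤ ·) c → c.Finite ∧ c.ncard = k := by
  intro a b hab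
  obtain ⟨c₀, hc₀, hc₀fin⟩ := hd a b hab
  obtain ⟨C, hC, habC⟩ := (IsChain.pair hab).exists_maxChain
  have hglue : ∀ c : Set (Icc a b), IsMaxChain (· ≤ ·) c →
      IsMaxChain (· ≤ ·) (Subtype.val '' c ∪ (C \ Icc a b)) :=
    fun _ => hC.image_val_union_diff_Icc (habC (mem_insert a {b}))
      (habC (mem_insert_of_mem a rfl)) hab
  have hdisj : ∀ c : Set (Icc a b), Disjoint (Subtype.val '' c) (C \ Icc a b) := fun c =>
    disjoint_sdiff_right.mono_left (Subtype.coe_image_subset _ c)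
  refine ⟨c₀.ncard, fun c hc => ?_⟩
  have hbal : BalancedSymmDiff (Subtype.val '' c₀) (Subtype.val '' c) :=
    (hsc.balancedSymmDiff (hglue c₀ hc₀) (hglue c hc)).of_union (hdisj c₀) (hdisj c)
  obtain ⟨hfin, hcard⟩ := hbal.finite_and_ncard_eq (hc₀fin.image _)
  rw [ncard_image_of_injective _ Subtype.val_injective,
    ncard_image_of_injective _ Subtype.val_injective] at hcard
  exact ⟨hfin.of_finite_image Subtype.val_injective.injOn, hcard⟩
end

section
/- Let P be a discrete poset in which every closed interval is graded (all maximal chains of each interval have the same finite length) and such that every pair of elements has a common upper bound and a common lower bound. Then there is a subset R of the integers and a map ρ : P → R restricting to an order isomorphism onto R on every maximal chain of P. -/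
/-!
Let `h(a, b)` be the common size of the maximal chains of `[a, b]`. Concatenating chains gives
`h(a, c) + 1 = h(a, b) + h(b, c)` for `a ≤ b ≤ c`, and since any two elements have a common lower
bound, this cocycle is a coboundary: `h(x, y) - 1 = ρ y - ρ x` for `x ≤ y`, where
`ρ x = h(z, x) - h(z, x₀)` for a fixed `x₀` and any common lower bound `z` of `x₀` and `x`.
Then `ρ` is strictly monotone, so on a maximal chain `c` it maps the `h(a, b)` elements of
`c ∩ [a, b]` injectively, hence bijectively, onto the `h(a, b)` integers of `[ρ a, ρ b]`.
Common upper and lower bounds show that the values of `ρ` on `c` enclose every value of `ρ`,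
so `R = range ρ` works.
-/

open Set

def IsLocallyGraded (α : Type*) [PartialOrder α] : Prop :=
  ∀ a b : α, a ≤ b → ∃ k : ℕ, ∀ c : Set (Icc a b), IsMaxChain (· ≤ ·) c → c.Finite ∧ c.ncard = k

section

variable {α : Type*} [PartialOrder α]

def IsMaxChainIn (S t : Set α) : Prop :=
  Maximal (fun u => IsChain (· ≤ ·) u ∧ u ⊆ S) t

namespace IsMaxChainIn

variable {S s t : Set α} {a b c x y : α}

lemma isChain (ht : IsMaxChainIn S t) : IsChain (· ≤ ·) t := ht.1.1

lemma subset (ht : IsMaxChainIn S t) : t ⊆ S := ht.1.2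

lemma mem_of_forall_comparable (ht : IsMaxChainIn S t) (hx : x ∈ S)
    (hcomp : ∀ z ∈ t, x ≤ z ∨ z ≤ x) : x ∈ t :=
  ht.2 ⟨ht.isChain.insert fun z hz _ => hcomp z hz, insert_subset hx ht.subset⟩
    (subset_insert x t) (mem_insert x t)

lemma left_mem (ht : IsMaxChainIn (Icc a b) t) (hab : a ≤ b) : a ∈ t :=
  ht.mem_of_forall_comparable (left_mem_Icc.2 hab) fun _ hz => Or.inl (ht.subset hz).1

lemma right_mem (ht : IsMaxChainIn (Icc a b) t) (hab : a ≤ b) : b ∈ t :=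
  ht.mem_of_forall_comparable (right_mem_Icc.2 hab) fun _ hz => Or.inr (ht.subset hz).2

lemma inter_Icc (ht : IsMaxChainIn S t) (hx : x ∈ t) (hy : y ∈ t) (hxy : Icc x y ⊆ S) :
    IsMaxChainIn (Icc x y) (t ∩ Icc x y) := by
  refine ⟨⟨ht.isChain.mono inter_subset_left, inter_subset_right⟩, fun u hu htu w hw => ?_⟩
  have hwxy := hu.2 hw
  refine ⟨ht.mem_of_forall_comparable (hxy hwxy) fun z hz => ?_, hwxy⟩
  rcases ht.isChain.total hz hx with hzx | hxz
  · exact Or.inr (hzx.trans hwxy.1)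
  rcases ht.isChain.total hz hy with hzy | hyz
  · exact hu.1.total hw (htu ⟨hz, hxz, hzy⟩)
  · exact Or.inl (hwxy.2.trans hyz)

lemma union (hs : IsMaxChainIn (Icc a b) s) (ht : IsMaxChainIn (Icc b c) t)
    (hab : a ≤ b) (hbc : b ≤ c) : IsMaxChainIn (Icc a c) (s ∪ t) := by
  have hst : ∀ x ∈ s, ∀ y ∈ t, x ≤ y := fun x hx y hy => (hs.subset hx).2.trans (ht.subset hy).1
  refine ⟨⟨?_, union_subset (hs.subset.trans (Icc_subset_Icc_right hbc))
    (ht.subset.trans (Icc_subset_Icc_left hab))⟩, fun u hu hstu w hw => ?_⟩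
  · rintro x (hx | hx) y (hy | hy) hxy
    exacts [hs.isChain hx hy hxy, Or.inl (hst x hx y hy), Or.inr (hst y hy x hx),
      ht.isChain hx hy hxy]
  have hwac := hu.2 hw
  have hcomp : ∀ z ∈ s ∪ t, w ≤ z ∨ z ≤ w := fun z hz => hu.1.total hw (hstu hz)
  rcases hcomp b (Or.inl (hs.right_mem hab)) with hwb | hbw
  · exact Or.inl (hs.mem_of_forall_comparable ⟨hwac.1, hwb⟩ fun z hz => hcomp z (Or.inl hz))
  · exact Or.inr (ht.mem_of_forall_comparable ⟨hbw, hwac.2⟩ fun z hz => hcomp z (Or.inr hz))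

end IsMaxChainIn

lemma IsMaxChain.isMaxChainIn_univ {c : Set α} (hc : IsMaxChain (· ≤ ·) c) :
    IsMaxChainIn univ c :=
  ⟨⟨hc.isChain, subset_univ c⟩, fun _ hu hcu => (hc.2 hu.1 hcu).ge⟩

lemma IsMaxChain.isMaxChainIn_image_val {S : Set α} {s : Set S}
    (hs : IsMaxChain (· ≤ ·) s) : IsMaxChainIn S (Subtype.val '' s) := by
  refine ⟨⟨Subtype.mono_coe _ |>.isChain_image hs.isChain, Subtype.coe_image_subset S s⟩,
    fun u hu hsu => ?_⟩
  have hchain : IsChain (· ≤ ·) (Subtype.val ⁻¹' u : Set S) :=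
    hu.1.preimage_embedding (OrderEmbedding.subtype _)
  rw [hs.2 hchain (image_subset_iff.1 hsu), Subtype.image_preimage_coe,
    inter_eq_self_of_subset_right hu.2]

lemma IsMaxChainIn.isMaxChain_preimage_val {S t : Set α} (ht : IsMaxChainIn S t) :
    IsMaxChain (· ≤ ·) (Subtype.val ⁻¹' t : Set S) := by
  refine ⟨ht.isChain.preimage_embedding (OrderEmbedding.subtype _), fun u hu htu => ?_⟩
  have hmax := ht.2 ⟨Subtype.mono_coe _ |>.isChain_image hu, Subtype.coe_image_subset S u⟩
    (fun x hx => ⟨⟨x, ht.subset hx⟩, htu hx, rfl⟩)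
  exact htu.antisymm fun x hx => hmax ⟨x, hx, rfl⟩

lemma exists_isMaxChainIn (S : Set α) : ∃ t, IsMaxChainIn S t :=
  ⟨_, (maxChain_spec (r := ((· ≤ ·) : S → S → Prop))).isMaxChainIn_image_val⟩

/-- The size of one maximal chain of `[a, b]`, chosen by Zorn's lemma; in a locally graded poset
all of them have this size (`IsLocallyGraded.finite_and_ncard_eq`). -/
noncomputable def intervalHeight (a b : α) : ℕ :=
  (maxChain (· ≤ ·) : Set (Icc a b)).ncard

namespace IsLocallyGraded

variable {a b c : α} {t : Set α}

lemma finite_and_ncard_eq (hgr : IsLocallyGraded α) (hab : a ≤ b)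
    (ht : IsMaxChainIn (Icc a b) t) : t.Finite ∧ t.ncard = intervalHeight a b := by
  obtain ⟨k, hk⟩ := hgr a b hab
  have hrange : t ⊆ range (Subtype.val : Icc a b → α) := by
    rw [Subtype.range_coe]
    exact ht.subset
  obtain ⟨hfin, hcard⟩ := hk _ ht.isMaxChain_preimage_val
  refine ⟨finite_of_finite_preimage hfin hrange, ?_⟩
  rw [← ncard_preimage_of_injective_subset_range Subtype.val_injective hrange, hcard,
    intervalHeight, (hk _ maxChain_spec).2]

lemma intervalHeight_add (hgr : IsLocallyGraded α) (hab : a ≤ b) (hbc : b ≤ c) :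
    intervalHeight a c + 1 = intervalHeight a b + intervalHeight b c := by
  obtain ⟨s, hs⟩ := exists_isMaxChainIn (Icc a b)
  obtain ⟨t, ht⟩ := exists_isMaxChainIn (Icc b c)
  have hst : s ∩ t = {b} := by
    refine (subset_singleton_iff.2 fun x hx => ?_).antisymm
      (singleton_subset_iff.2 ⟨hs.right_mem hab, ht.left_mem hbc⟩)
    exact le_antisymm (hs.subset hx.1).2 (ht.subset hx.2).1
  obtain ⟨hs_fin, hs_card⟩ := hgr.finite_and_ncard_eq hab hs
  obtain ⟨ht_fin, ht_card⟩ := hgr.finite_and_ncard_eq hbc ht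
  rw [← (hgr.finite_and_ncard_eq (hab.trans hbc) (hs.union ht hab hbc)).2, ← hs_card, ← ht_card,
    ← ncard_singleton b, ← hst, ncard_union_add_ncard_inter s t hs_fin ht_fin]

lemma two_le_intervalHeight (hgr : IsLocallyGraded α) (hab : a < b) : 2 ≤ intervalHeight a b := by
  obtain ⟨t, ht⟩ := exists_isMaxChainIn (Icc a b)
  obtain ⟨ht_fin, ht_card⟩ := hgr.finite_and_ncard_eq hab.le ht
  rw [← ht_card, ← ncard_pair hab.ne]
  exact ncard_le_ncard (pair_subset (ht.left_mem hab.le) (ht.right_mem hab.le)) ht_fin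

end IsLocallyGraded

lemma exists_potential [IsCodirectedOrder α] (g : α → α → ℤ)
    (hg : ∀ a b c, a ≤ b → b ≤ c → g a c = g a b + g b c) :
    ∃ ρ : α → ℤ, ∀ x y, x ≤ y → ρ y = ρ x + g x y := by
  rcases isEmpty_or_nonempty α with _ | ⟨⟨x₀⟩⟩
  · exact ⟨fun _ => 0, fun x => isEmptyElim x⟩
  have hindep : ∀ x z z', z ≤ x₀ → z ≤ x → z' ≤ x₀ → z' ≤ x →
      g z x - g z x₀ = g z' x - g z' x₀ := by
    intro x z z' hz₀ hz hz'₀ hz'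
    obtain ⟨w, hwz, hwz'⟩ := exists_le_le z z'
    have := hg w z x hwz hz
    have := hg w z x₀ hwz hz₀
    have := hg w z' x hwz' hz'
    have := hg w z' x₀ hwz' hz'₀
    omega
  choose z hz₀ hz using fun x => exists_le_le x₀ x
  refine ⟨fun x => g (z x) x - g (z x) x₀, fun x y hxy => ?_⟩
  have := hindep y (z y) (z x) (hz₀ y) (hz y) (hz₀ x) ((hz x).trans hxy)
  have := hg (z x) x y (hz x) hxy
  dsimp only
  omega

lemma StrictMono.le_iff_le_of_isChain {β : Type*} [Preorder β] {f : α → β} (hf : StrictMono f)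
    {c : Set α} (hc : IsChain (· ≤ ·) c) {x y : α} (hx : x ∈ c) (hy : y ∈ c) :
    f x ≤ f y ↔ x ≤ y := by
  refine ⟨fun h => ?_, fun h => hf.monotone h⟩
  rcases hc.total hx hy with hxy | hyx
  · exact hxy
  rcases hyx.eq_or_lt with rfl | hlt
  · exact le_rfl
  · exact absurd h (hf hlt).not_ge

lemma IsMaxChain.exists_mem_le [IsDirectedOrder α] {ρ : α → ℤ} (hρ : StrictMono ρ)
    {c : Set α} (hc : IsMaxChain (· ≤ ·) c) (w : α) : ∃ b ∈ c, ρ w ≤ ρ b := by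
  by_cases hbdd : BddAbove (ρ '' c)
  · have hne : (ρ '' c).Nonempty := (hc.nonempty_iff.1 ⟨w⟩).image ρ
    obtain ⟨m, hm, hρm⟩ := Int.csSup_mem hne hbdd
    -- `m` is the top of `c`, so any upper bound of `m` and `w` lies in `c`
    obtain ⟨u, hmu, hwu⟩ := exists_ge_ge m w
    have hu : u ∈ c := hc.isMaxChainIn_univ.mem_of_forall_comparable (mem_univ u) fun z hz =>
      Or.inr (((hρ.le_iff_le_of_isChain hc.isChain hz hm).1
        (hρm ▸ le_csSup hbdd (mem_image_of_mem ρ hz))).trans hmu)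
    exact ⟨m, hm, (hρ.monotone hwu).trans (hρm ▸ le_csSup hbdd (mem_image_of_mem ρ hu))⟩
  · obtain ⟨_, ⟨b, hb, rfl⟩, hlt⟩ := not_bddAbove_iff.1 hbdd (ρ w)
    exact ⟨b, hb, hlt.le⟩

lemma IsMaxChain.exists_mem_ge [IsCodirectedOrder α] {ρ : α → ℤ} (hρ : StrictMono ρ)
    {c : Set α} (hc : IsMaxChain (· ≤ ·) c) (w : α) : ∃ a ∈ c, ρ a ≤ ρ w := by
  obtain ⟨a, ha, h⟩ := IsMaxChain.exists_mem_le (α := αᵒᵈ) (ρ := fun x => -ρ (OrderDual.ofDual x))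
    (fun _ _ hxy => neg_lt_neg (hρ hxy)) hc.symm (OrderDual.toDual w)
  exact ⟨a, ha, neg_le_neg_iff.1 h⟩

namespace IsLocallyGraded

variable {ρ : α → ℤ}

lemma strictMono (hgr : IsLocallyGraded α)
    (hρ : ∀ x y, x ≤ y → ρ y = ρ x + (intervalHeight x y - 1)) : StrictMono ρ := by
  intro x y hxy
  have := hρ x y hxy.le
  have := hgr.two_le_intervalHeight hxy
  omega

lemma image_inter_Icc_eq (hgr : IsLocallyGraded α)
    (hρ : ∀ x y, x ≤ y → ρ y = ρ x + (intervalHeight x y - 1)) {c : Set α}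
    (hc : IsMaxChain (· ≤ ·) c) {a b : α} (ha : a ∈ c) (hb : b ∈ c) (hab : a ≤ b) :
    ρ '' (c ∩ Icc a b) = Icc (ρ a) (ρ b) := by
  have hT := hc.isMaxChainIn_univ.inter_Icc ha hb (subset_univ _)
  obtain ⟨hfin, hcard⟩ := hgr.finite_and_ncard_eq hab hT
  have hmono := hgr.strictMono hρ
  have hinj : InjOn ρ (c ∩ Icc a b) := fun x hx y hy h =>
    le_antisymm ((hmono.le_iff_le_of_isChain hT.isChain hx hy).1 h.le)
      ((hmono.le_iff_le_of_isChain hT.isChain hy hx).1 h.ge)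
  have hsub : ρ '' (c ∩ Icc a b) ⊆ Icc (ρ a) (ρ b) := image_subset_iff.2 fun x hx =>
    ⟨hmono.monotone hx.2.1, hmono.monotone hx.2.2⟩
  refine eq_of_subset_of_ncard_le hsub ?_ (finite_Icc _ _)
  rw [hinj.ncard_image, hcard, ← Finset.coe_Icc, ncard_coe_finset, Int.card_Icc, hρ a b hab]
  omega

end IsLocallyGraded

end

theorem discrete_locallyGraded_has_grading_general {α : Type*} [PartialOrder α]
    (hgr : ∀ a b : α, a ≤ b → ∃ k : ℕ, ∀ c : Set (Set.Icc a b),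
      IsMaxChain (· ≤ ·) c → c.Finite ∧ c.ncard = k)
    (hub : ∀ x y : α, ∃ z, x ≤ z ∧ y ≤ z) (hlb : ∀ x y : α, ∃ z, z ≤ x ∧ z ≤ y) :
    ∃ (R : Set ℤ) (ρ : α → ℤ), (∀ x, ρ x ∈ R) ∧
      ∀ c : Set α, IsMaxChain (· ≤ ·) c →
        (∀ x ∈ c, ∀ y ∈ c, x ≤ y ↔ ρ x ≤ ρ y) ∧ ∀ r ∈ R, ∃ x ∈ c, ρ x = r := by
  have hgr : IsLocallyGraded α := hgr
  have : IsDirectedOrder α := ⟨hub⟩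
  have : IsCodirectedOrder α := ⟨hlb⟩
  obtain ⟨ρ, hρ⟩ := exists_potential (fun a b => (intervalHeight a b : ℤ) - 1)
    fun a b c hab hbc => by have := hgr.intervalHeight_add hab hbc; omega
  have hmono := hgr.strictMono hρ
  refine ⟨range ρ, ρ, mem_range_self, fun c hc =>
    ⟨fun x hx y hy => (hmono.le_iff_le_of_isChain hc.isChain hx hy).symm, ?_⟩⟩
  rintro _ ⟨w, rfl⟩
  obtain ⟨a, ha, haw⟩ := hc.exists_mem_ge hmono w
  obtain ⟨b, hb, hwb⟩ := hc.exists_mem_le hmono w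
  have hab : a ≤ b := (hmono.le_iff_le_of_isChain hc.isChain ha hb).1 (haw.trans hwb)
  have hw : ρ w ∈ Icc (ρ a) (ρ b) := ⟨haw, hwb⟩
  rw [← hgr.image_inter_Icc_eq hρ hc ha hb hab] at hw
  obtain ⟨x, hx, hxw⟩ := hw
  exact ⟨x, hx.1, hxw⟩

/-- A discrete locally graded poset in which every pair of elements has a common upper
and lower bound admits an R-grading for some R ⊆ ℤ. -/
theorem discrete_locallyGraded_has_grading {α : Type*} [PartialOrder α]
    (hd : DiscretePoset α)
    (hgr : ∀ a b : α, a ≤ b → ∃ k : ℕ, ∀ c : Set (Set.Icc a b),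
      IsMaxChain (· ≤ ·) c → c.Finite ∧ c.ncard = k)
    (hub : ∀ x y : α, ∃ z, x ≤ z ∧ y ≤ z) (hlb : ∀ x y : α, ∃ z, z ≤ x ∧ z ≤ y) :
    ∃ (R : Set ℤ) (ρ : α → ℤ), (∀ x, ρ x ∈ R) ∧
      ∀ c : Set α, IsMaxChain (· ≤ ·) c →
        (∀ x ∈ c, ∀ y ∈ c, x ≤ y ↔ ρ x ≤ ρ y) ∧ ∀ r ∈ R, ∃ x ∈ c, ρ x = r :=
  discrete_locallyGraded_has_grading_general hgr hub hlb
end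

section
/- If P is a discrete strongly connected poset, then P admits an R-grading for some subset R of the integers; consequently, the antichain cutsets of a discrete strongly connected poset are exactly the level sets of this grading. -/
/-!
Exchanging one element of a maximal chain for another, as in the definition of strong
connectivity, is induced by a transposition of `α` that maps the first chain
order-isomorphically onto the second. Composing along paths, any two maximal chains `c`, `d`
are related by a *transport*: a permutation moving finitely many points and mapping `c`
order-isomorphically onto `d`. If `c` and `d` agree up to `v`, such a transport fixes every
point of `c` below `v`, because a minimal moved point cannot exist. Hence a transport from `c`
to itself is the identity on `c`, transports from `c` to `d` agree on `c`, and, routing through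
the chain that follows `c` below `v` and `d` above `v`, they fix the common points of `c` and
`d`. So sending an element to its image on a fixed maximal chain `c₀` is well defined.
Discreteness and strong connectivity make every interval of `c₀` finite, so `c₀` embeds in `ℤ`,
and the composite is the grading. A cutset meets the two chains of a swap in points of the same
level, so it is a level set.
-/

section

open Set Equiv

variable {α : Type*} [PartialOrder α]

lemma IsMaxChain.mem_of_forall_le_or_ge_s7 {c : Set α} (hc : IsMaxChain (· ≤ ·) c) {a : α}
    (h : ∀ b ∈ c, a ≤ b ∨ b ≤ a) : a ∈ c :=
  (Flag.ofIsMaxChain c hc).mem_iff_forall_le_or_ge.2 h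

structure IsSwap (c d : Set α) (x y : α) : Prop where
  isMaxChain_left : IsMaxChain (· ≤ ·) c
  isMaxChain_right : IsMaxChain (· ≤ ·) d
  sdiff_left : c \ d = {x}
  sdiff_right : d \ c = {y}

namespace IsSwap

variable {c d : Set α} {x y z : α}

lemma symm (h : IsSwap c d x y) : IsSwap d c y x :=
  ⟨h.isMaxChain_right, h.isMaxChain_left, h.sdiff_right, h.sdiff_left⟩

lemma fst_mem_sdiff (h : IsSwap c d x y) : x ∈ c \ d := h.sdiff_left ▸ rfl

lemma fst_mem (h : IsSwap c d x y) : x ∈ c := h.fst_mem_sdiff.1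

lemma fst_notMem (h : IsSwap c d x y) : x ∉ d := h.fst_mem_sdiff.2

lemma snd_mem (h : IsSwap c d x y) : y ∈ d := h.symm.fst_mem

lemma snd_notMem (h : IsSwap c d x y) : y ∉ c := h.symm.fst_notMem

lemma mem_right (h : IsSwap c d x y) (hz : z ∈ c) (hzx : z ≠ x) : z ∈ d := by
  by_contra hzd
  have hz' : z ∈ c \ d := ⟨hz, hzd⟩
  rw [h.sdiff_left] at hz'
  exact hzx hz'

lemma mem_left (h : IsSwap c d x y) (hz : z ∈ d) (hzy : z ≠ y) : z ∈ c := h.symm.mem_right hz hzy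

lemma le_or_ge_snd (h : IsSwap c d x y) (hz : z ∈ c) (hzx : z ≠ x) : z ≤ y ∨ y ≤ z :=
  h.isMaxChain_right.isChain.total (h.mem_right hz hzx) h.snd_mem

-- `y` is comparable with every element of `c` but `x`, so comparability with `x` would put it
-- in `c`.
lemma not_le_or_ge (h : IsSwap c d x y) : ¬ (x ≤ y ∨ y ≤ x) := fun hxy =>
  h.snd_notMem <| h.isMaxChain_left.mem_of_forall_le_or_ge_s7 fun z hz => by
    rcases eq_or_ne z x with rfl | hzx
    · exact hxy.symm
    · exact (h.le_or_ge_snd hz hzx).symm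

lemma le_fst_iff (h : IsSwap c d x y) (hz : z ∈ c) (hzx : z ≠ x) : z ≤ x ↔ z ≤ y := by
  have hincomp := h.not_le_or_ge
  constructor
  · intro hzx'
    refine (h.le_or_ge_snd hz hzx).resolve_right fun hyz => hincomp (Or.inr (hyz.trans hzx'))
  · intro hzy
    refine (h.isMaxChain_left.isChain.total hz h.fst_mem).resolve_right
      fun hxz => hincomp (Or.inl (hxz.trans hzy))

lemma fst_le_iff (h : IsSwap c d x y) (hz : z ∈ c) (hzx : z ≠ x) : x ≤ z ↔ y ≤ z := by
  have hincomp := h.not_le_or_ge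
  constructor
  · intro hxz
    refine (h.le_or_ge_snd hz hzx).resolve_left fun hzy => hincomp (Or.inl (hxz.trans hzy))
  · intro hyz
    refine (h.isMaxChain_left.isChain.total hz h.fst_mem).resolve_left
      fun hzx' => hincomp (Or.inr (hyz.trans hzx'))

end IsSwap

lemma exists_isSwap_of_ncard_symmDiff {c d : Set α} (hc : IsMaxChain (· ≤ ·) c)
    (hd : IsMaxChain (· ≤ ·) d) (h : (symmDiff c d).ncard = 2) : ∃ x y, IsSwap c d x y := by
  have hcd : c ≠ d := by
    rintro rfl
    simp at h
  have hfin : (symmDiff c d).Finite := finite_of_ncard_pos (by omega)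
  rw [Set.symmDiff_def] at h hfin
  have hfin_left := hfin.subset subset_union_left
  have hfin_right := hfin.subset subset_union_right
  have h_left := (ncard_pos hfin_left).2 (sdiff_nonempty.2 fun hsub => hcd (hc.2 hd.1 hsub))
  have h_right := (ncard_pos hfin_right).2 (sdiff_nonempty.2 fun hsub => hcd (hd.2 hc.1 hsub).symm)
  rw [ncard_union_eq disjoint_sdiff_sdiff hfin_left hfin_right] at h
  obtain ⟨x, hx⟩ := ncard_eq_one.1 (show (c \ d).ncard = 1 by omega)
  obtain ⟨y, hy⟩ := ncard_eq_one.1 (show (d \ c).ncard = 1 by omega)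
  exact ⟨x, y, hc, hd, hx, hy⟩

lemma StronglyConnectedOrder.induction (hsc : StronglyConnectedOrder α) (P : Set α → Prop)
    (hP : ∀ c d x y, IsSwap c d x y → P c → P d) {c d : Set α} (hc : IsMaxChain (· ≤ ·) c)
    (hd : IsMaxChain (· ≤ ·) d) (h : P c) : P d := by
  obtain ⟨n, f, rfl, rfl, hmax, hswap⟩ := hsc c d hc hd
  suffices ∀ i ≤ n, P (f i) from this n le_rfl
  intro i
  induction i with
  | zero => exact fun _ => h
  | succ i ih =>
    intro hi
    obtain ⟨x, y, hxy⟩ := exists_isSwap_of_ncard_symmDiff (hmax i (by omega)) (hmax (i + 1) hi)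
      (hswap i hi)
    exact hP _ _ x y hxy (ih (by omega))

structure IsTransport (c d : Set α) (σ : Perm α) : Prop where
  image_eq : σ '' c = d
  le_iff : ∀ z ∈ c, ∀ w ∈ c, σ z ≤ σ w ↔ z ≤ w
  finite_moved : {z | σ z ≠ z}.Finite

namespace IsTransport

variable {c d e : Set α} {σ τ : Perm α}

lemma refl (c : Set α) : IsTransport c c 1 :=
  ⟨image_id c, fun _ _ _ _ => Iff.rfl, by simp⟩

lemma mapsTo (h : IsTransport c d σ) {z : α} (hz : z ∈ c) : σ z ∈ d :=
  h.image_eq ▸ mem_image_of_mem σ hz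

lemma trans (h : IsTransport c d σ) (h' : IsTransport d e τ) : IsTransport c e (τ * σ) where
  image_eq := by rw [Perm.coe_mul, image_comp, h.image_eq, h'.image_eq]
  le_iff z hz w hw := (h'.le_iff _ (h.mapsTo hz) _ (h.mapsTo hw)).trans (h.le_iff z hz w hw)
  finite_moved := (h'.finite_moved.union h.finite_moved).subset (Perm.set_support_mul_subset τ σ)

lemma symm (h : IsTransport c d σ) : IsTransport d c σ⁻¹ where
  image_eq := by rw [← h.image_eq, Perm.inv_def, symm_image_image]
  le_iff := by
    rw [← h.image_eq]
    rintro _ ⟨z, hz, rfl⟩ _ ⟨w, hw, rfl⟩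
    simpa using (h.le_iff z hz w hw).symm
  finite_moved := by rw [Perm.inv_def, Perm.set_support_symm_eq]; exact h.finite_moved

end IsTransport

namespace IsSwap

variable [DecidableEq α] {c d : Set α} {x y z : α}

lemma swap_apply_of_mem (h : IsSwap c d x y) (hz : z ∈ c) (hzx : z ≠ x) : swap x y z = z :=
  swap_apply_of_ne_of_ne hzx (ne_of_mem_of_not_mem hz h.snd_notMem)

lemma isTransport (h : IsSwap c d x y) : IsTransport c d (swap x y) where
  image_eq := by
    ext w
    constructor
    · rintro ⟨z, hz, rfl⟩
      rcases eq_or_ne z x with rfl | hzx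
      · simpa using h.snd_mem
      · rw [h.swap_apply_of_mem hz hzx]
        exact h.mem_right hz hzx
    · intro hw
      rcases eq_or_ne w y with rfl | hwy
      · exact ⟨x, h.fst_mem, swap_apply_left x w⟩
      · have hwc := h.mem_left hw hwy
        exact ⟨w, hwc, h.swap_apply_of_mem hwc (ne_of_mem_of_not_mem hw h.fst_notMem)⟩
  le_iff z hz w hw := by
    by_cases hzx : z = x <;> by_cases hwx : w = x
    · subst hzx hwx; exact iff_of_true le_rfl le_rfl
    · subst hzx; rw [swap_apply_left, h.swap_apply_of_mem hw hwx, ← h.fst_le_iff hw hwx]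
    · subst hwx; rw [swap_apply_left, h.swap_apply_of_mem hz hzx, ← h.le_fst_iff hz hzx]
    · rw [h.swap_apply_of_mem hz hzx, h.swap_apply_of_mem hw hwx]
  finite_moved := (toFinite {x, y}).subset fun w hw => by
    by_contra hxy
    simp only [mem_insert_iff, mem_singleton_iff, not_or] at hxy
    exact hw (swap_apply_of_ne_of_ne hxy.1 hxy.2)

end IsSwap

lemma StronglyConnectedOrder.exists_isTransport (hsc : StronglyConnectedOrder α) {c d : Set α}
    (hc : IsMaxChain (· ≤ ·) c) (hd : IsMaxChain (· ≤ ·) d) : ∃ σ, IsTransport c d σ := by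
  classical
  exact hsc.induction (fun e => ∃ σ, IsTransport c e σ)
    (fun _ _ _ _ hswap ⟨_, hσ⟩ => ⟨_, hσ.trans hswap.isTransport⟩) hc hd ⟨1, .refl c⟩

namespace IsTransport

variable {c d e : Set α} {σ τ : Perm α}

lemma dual (h : IsTransport c d σ) : IsTransport (α := αᵒᵈ) c d σ :=
  ⟨h.image_eq, fun z hz w hw => h.le_iff w hw z hz, h.finite_moved⟩

-- A minimal moved point `z` below `v` leads to a contradiction: if `z < σ z` then the preimage
-- of `z` is a smaller moved point, and if `σ z < z` then `σ z` itself is one.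
lemma apply_eq_of_inter_Iic_eq (h : IsTransport c e σ) (he : IsChain (· ≤ ·) e) {v : α}
    (hv : c ∩ Iic v = e ∩ Iic v) {z : α} (hz : z ∈ c ∩ Iic v) : σ z = z := by
  by_contra hσz
  obtain ⟨z, hmin⟩ := (h.finite_moved.subset fun t (ht : t ∈ c ∩ Iic v ∧ σ t ≠ t) => ht.2)
    |>.exists_minimal ⟨z, hz, hσz⟩
  obtain ⟨⟨hzc, hzv⟩, hσz⟩ := hmin.prop
  have hfixed : ∀ t ∈ c ∩ Iic v, t < z → σ t = t := fun t ht hlt =>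
    not_not.1 fun hσt => hmin.not_lt ⟨ht, hσt⟩ hlt
  have hze : z ∈ e := (hv ▸ ⟨hzc, hzv⟩ : z ∈ e ∩ Iic v).1
  rcases he.total hze (h.mapsTo hzc) with hle | hle
  · obtain ⟨t, htc, hσt⟩ : z ∈ σ '' c := h.image_eq ▸ hze
    have hlt : t < z := by
      refine lt_of_le_of_ne ((h.le_iff t htc z hzc).1 (hσt ▸ hle)) ?_
      rintro rfl
      exact hσz hσt
    exact hlt.ne (hσt ▸ hfixed t ⟨htc, hlt.le.trans hzv⟩ hlt).symm
  · have hlt : σ z < z := lt_of_le_of_ne hle hσz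
    have hmem : σ z ∈ c ∩ Iic v := hv ▸ ⟨h.mapsTo hzc, hle.trans hzv⟩
    exact hσz (σ.injective (hfixed _ hmem hlt))

lemma apply_eq_of_inter_Ici_eq (h : IsTransport c e σ) (he : IsChain (· ≤ ·) e) {v : α}
    (hv : c ∩ Ici v = e ∩ Ici v) {z : α} (hz : z ∈ c ∩ Ici v) : σ z = z :=
  h.dual.apply_eq_of_inter_Iic_eq (α := αᵒᵈ) he.symm hv hz

lemma apply_eq_of_loop (h : IsTransport c c σ) (hc : IsChain (· ≤ ·) c) {z : α} (hz : z ∈ c) :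
    σ z = z :=
  h.apply_eq_of_inter_Iic_eq hc rfl ⟨hz, le_rfl⟩

lemma eqOn (hσ : IsTransport c d σ) (hτ : IsTransport c d τ) (hc : IsChain (· ≤ ·) c) :
    EqOn σ τ c := fun z hz => by
  have := (hσ.trans hτ.symm).apply_eq_of_loop hc hz
  rwa [Perm.mul_apply, Perm.inv_def, symm_apply_eq] at this

end IsTransport

lemma IsMaxChain.inter_Iic_union_inter_Ici {c d : Set α} (hc : IsMaxChain (· ≤ ·) c)
    (hd : IsMaxChain (· ≤ ·) d) {v : α} (hvc : v ∈ c) (hvd : v ∈ d) :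
    IsMaxChain (· ≤ ·) (c ∩ Iic v ∪ d ∩ Ici v) := by
  refine ⟨?_, fun t ht hsub => hsub.antisymm fun w hw => ?_⟩
  · rintro z (⟨hz, hzv⟩ | ⟨hz, hvz⟩) w (⟨hw, hwv⟩ | ⟨hw, hvw⟩) hne
    · exact hc.isChain hz hw hne
    · exact Or.inl (hzv.trans hvw)
    · exact Or.inr (hwv.trans hvz)
    · exact hd.isChain hz hw hne
  have hcomp : ∀ u ∈ c ∩ Iic v ∪ d ∩ Ici v, w ≤ u ∨ u ≤ w := fun u hu => ht.total hw (hsub hu)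
  rcases hcomp v (Or.inl ⟨hvc, le_rfl⟩) with hwv | hvw
  · refine Or.inl ⟨hc.mem_of_forall_le_or_ge_s7 fun u hu => ?_, hwv⟩
    rcases hc.isChain.total hu hvc with huv | hvu
    · exact hcomp u (Or.inl ⟨hu, huv⟩)
    · exact Or.inl (hwv.trans hvu)
  · refine Or.inr ⟨hd.mem_of_forall_le_or_ge_s7 fun u hu => ?_, hvw⟩
    rcases hd.isChain.total hu hvd with huv | hvu
    · exact Or.inr (huv.trans hvw)
    · exact hcomp u (Or.inr ⟨hu, hvu⟩)

namespace StronglyConnectedOrder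

variable (hsc : StronglyConnectedOrder α)
include hsc

-- Through the chain that follows `c` below `v` and `d` above `v`, the transport from `c` to `d`
-- factors into one fixing everything below `v` and one fixing everything above `v`.
lemma isTransport_apply_eq_self {c d : Set α} {σ : Perm α} (h : IsTransport c d σ)
    (hc : IsMaxChain (· ≤ ·) c) (hd : IsMaxChain (· ≤ ·) d) {v : α} (hvc : v ∈ c)
    (hvd : v ∈ d) : σ v = v := by
  set e := c ∩ Iic v ∪ d ∩ Ici v
  have he : IsMaxChain (· ≤ ·) e := hc.inter_Iic_union_inter_Ici hd hvc hvd
  have hlow : c ∩ Iic v = e ∩ Iic v := by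
    ext t
    simp only [e, mem_inter_iff, mem_union, mem_Iic, mem_Ici]
    constructor
    · rintro ⟨htc, htv⟩
      exact ⟨Or.inl ⟨htc, htv⟩, htv⟩
    · rintro ⟨⟨htc, -⟩ | ⟨-, hvt⟩, htv⟩
      · exact ⟨htc, htv⟩
      · exact ⟨le_antisymm htv hvt ▸ hvc, htv⟩
  have hhigh : e ∩ Ici v = d ∩ Ici v := by
    ext t
    simp only [e, mem_inter_iff, mem_union, mem_Iic, mem_Ici]
    constructor
    · rintro ⟨⟨-, htv⟩ | ⟨htd, -⟩, hvt⟩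
      · exact ⟨le_antisymm htv hvt ▸ hvd, hvt⟩
      · exact ⟨htd, hvt⟩
    · rintro ⟨htd, hvt⟩
      exact ⟨Or.inr ⟨htd, hvt⟩, hvt⟩
  obtain ⟨τ₁, h₁⟩ := hsc.exists_isTransport hc he
  obtain ⟨τ₂, h₂⟩ := hsc.exists_isTransport he hd
  have hτ₁ : τ₁ v = v := h₁.apply_eq_of_inter_Iic_eq he.isChain hlow ⟨hvc, le_rfl⟩
  have hτ₂ : τ₂ v = v := h₂.apply_eq_of_inter_Ici_eq hd.isChain hhigh ⟨Or.inl ⟨hvc, le_rfl⟩, le_rfl⟩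
  calc σ v = (τ₂ * τ₁) v := h.eqOn (h₁.trans h₂) hc.isChain hvc
    _ = v := by rw [Perm.mul_apply, hτ₁, hτ₂]

lemma exists_eqOn_isTransport {c₀ : Set α} (hc₀ : IsMaxChain (· ≤ ·) c₀) :
    ∃ θ : α → α, ∀ c σ, IsMaxChain (· ≤ ·) c → IsTransport c c₀ σ → EqOn θ σ c := by
  choose cv hvcv using Flag.exists_mem (α := α)
  choose σv hσv using fun v => hsc.exists_isTransport (cv v).maxChain hc₀
  refine ⟨fun v => σv v v, fun c σ hc hσ v hvc => ?_⟩
  obtain ⟨π, hπ⟩ := hsc.exists_isTransport hc (cv v).maxChain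
  calc σv v v = σv v (π v) := by
        rw [hsc.isTransport_apply_eq_self hπ hc (cv v).maxChain hvc (hvcv v)]
    _ = σ v := (hσ.eqOn (hπ.trans (hσv v)) hc.isChain hvc).symm

end StronglyConnectedOrder

lemma DiscretePoset.finite_inter_Icc (hd : DiscretePoset α) (hsc : StronglyConnectedOrder α)
    {c : Set α} (hc : IsMaxChain (· ≤ ·) c) (a b : α) : (c ∩ Icc a b).Finite := by
  refine (em (a ≤ b)).elim (fun hab => ?_) fun hab => by simp [Icc_eq_empty hab]
  obtain ⟨s, hs, hsfin⟩ := hd a b hab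
  obtain ⟨d, hdmax, hsd⟩ := (hs.isChain.image (OrderEmbedding.subtype _)).exists_maxChain
  have hdIcc : d ∩ Icc a b ⊆ Subtype.val '' s := fun z ⟨hzd, hz⟩ =>
    ⟨⟨z, hz⟩, hs.mem_of_forall_le_or_ge_s7 fun w hw => hdmax.isChain.total hzd (hsd ⟨w, hw, rfl⟩), rfl⟩
  obtain ⟨σ, hσ⟩ := hsc.exists_isTransport hc hdmax
  have hcd : c \ d ⊆ {z | σ z ≠ z} := fun z ⟨hzc, hzd⟩ hσz => hzd (hσz ▸ hσ.mapsTo hzc)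
  refine ((hσ.finite_moved.subset hcd).union (hsfin.image Subtype.val)).subset fun z ⟨hzc, hz⟩ => ?_
  by_cases hzd : z ∈ d
  · exact Or.inr (hdIcc ⟨hzd, hz⟩)
  · exact Or.inl ⟨hzc, hzd⟩

lemma IsChain.exists_int_le_iff {c : Set α} (hc : IsChain (· ≤ ·) c)
    (hfin : ∀ a b, (c ∩ Icc a b).Finite) :
    ∃ ℓ : α → ℤ, ∀ z ∈ c, ∀ w ∈ c, ℓ z ≤ ℓ w ↔ z ≤ w := by
  classical
  rcases c.eq_empty_or_nonempty with rfl | ⟨i₀, hi₀⟩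
  · exact ⟨0, by simp⟩
  let : LinearOrder c := hc.linearOrder
  let : LocallyFiniteOrder c := .ofFiniteIcc fun a b =>
    ((hfin a b).preimage Subtype.val_injective.injOn).subset fun z hz => ⟨z.2, hz⟩
  let := LinearLocallyFiniteOrder.succOrder c
  let := LinearLocallyFiniteOrder.predOrder c
  refine ⟨fun z => if hz : z ∈ c then toZ (⟨i₀, hi₀⟩ : c) ⟨z, hz⟩ else 0, fun z hz w hw => ?_⟩
  simp only [dif_pos hz, dif_pos hw]
  exact toZ_le_toZ

structure IsGrading (R : Set ℤ) (ρ : α → ℤ) : Prop where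
  mem : ∀ x, ρ x ∈ R
  le_iff : ∀ c, IsMaxChain (· ≤ ·) c → ∀ x ∈ c, ∀ y ∈ c, x ≤ y ↔ ρ x ≤ ρ y
  surjOn : ∀ c, IsMaxChain (· ≤ ·) c → ∀ r ∈ R, ∃ x ∈ c, ρ x = r

namespace IsGrading

variable {R : Set ℤ} {ρ : α → ℤ} {c d : Set α} {x y : α}

lemma eq_of_apply_eq (hρ : IsGrading R ρ) (hc : IsMaxChain (· ≤ ·) c) (hx : x ∈ c) (hy : y ∈ c)
    (h : ρ x = ρ y) : x = y :=
  le_antisymm ((hρ.le_iff c hc x hx y hy).2 h.le) ((hρ.le_iff c hc y hy x hx).2 h.ge)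

lemma apply_eq_of_isSwap (hρ : IsGrading R ρ) (h : IsSwap c d x y) : ρ x = ρ y := by
  obtain ⟨w, hwd, hw⟩ := hρ.surjOn d h.isMaxChain_right (ρ x) (hρ.mem x)
  rcases eq_or_ne w y with rfl | hwy
  · exact hw.symm
  · have hwx := hρ.eq_of_apply_eq h.isMaxChain_left (h.mem_left hwd hwy) h.fst_mem hw
    exact absurd (hwx ▸ hwd) h.fst_notMem

-- The element of `A` on `c` either survives into `d` or is the exchanged one.
lemma apply_eq_of_isSwap_of_isAntichainCutset (hρ : IsGrading R ρ) (h : IsSwap c d x y)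
    {A : Set α} (hA : IsAntichainCutset A) {b b' : α} (hb : b ∈ c ∩ A) (hb' : b' ∈ d ∩ A) :
    ρ b = ρ b' := by
  rcases eq_or_ne b' y with rfl | hb'y
  · have hbx : b = x := by
      by_contra hbx
      exact h.snd_notMem <|
        (hA d h.isMaxChain_right).unique ⟨h.mem_right hb.1 hbx, hb.2⟩ hb' ▸ hb.1
    rw [hbx, hρ.apply_eq_of_isSwap h]
  · rw [(hA c h.isMaxChain_left).unique hb ⟨h.mem_left hb'.1 hb'y, hb'.2⟩]

lemma isAntichainCutset_iff (hρ : IsGrading R ρ) (hsc : StronglyConnectedOrder α) {A : Set α} :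
    IsAntichainCutset A ↔ ∃ r ∈ R, A = {x | ρ x = r} ∧ A.Nonempty := by
  constructor
  · intro hA
    obtain ⟨c₀, hc₀, -⟩ := (IsChain.empty : IsChain (· ≤ ·) (∅ : Set α)).exists_maxChain
    obtain ⟨a, ha, -⟩ := hA c₀ hc₀
    have hlevel : ∀ c, IsMaxChain (· ≤ ·) c → ∀ b ∈ c ∩ A, ρ b = ρ a := by
      refine fun c hc => hsc.induction (fun c => ∀ b ∈ c ∩ A, ρ b = ρ a) ?_ hc₀ hc
        fun b hb => by rw [(hA c₀ hc₀).unique hb ha]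
      intro c d x y h hc b' hb'
      obtain ⟨b, hb, -⟩ := hA c h.isMaxChain_left
      rw [← hc b hb, hρ.apply_eq_of_isSwap_of_isAntichainCutset h hA hb hb']
    refine ⟨ρ a, hρ.mem a, ext fun z => ?_, a, ha.2⟩
    obtain ⟨c, hzc⟩ := Flag.exists_mem z
    obtain ⟨b, hb, -⟩ := hA c c.maxChain
    refine ⟨fun hzA => hlevel c c.maxChain z ⟨hzc, hzA⟩, fun hz => ?_⟩
    have hbz := hρ.eq_of_apply_eq c.maxChain hb.1 hzc ((hlevel c c.maxChain b hb).trans hz.symm)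
    exact hbz ▸ hb.2
  · rintro ⟨r, hr, rfl, -⟩ c hc
    obtain ⟨x, hxc, hx⟩ := hρ.surjOn c hc r hr
    exact ⟨x, ⟨hxc, hx⟩, fun y ⟨hyc, hy⟩ => hρ.eq_of_apply_eq hc hyc hxc (hy.trans hx.symm)⟩

end IsGrading

theorem DiscretePoset.exists_isGrading (hd : DiscretePoset α) (hsc : StronglyConnectedOrder α) :
    ∃ R ρ, IsGrading R (ρ : α → ℤ) := by
  obtain ⟨c₀, hc₀, -⟩ := (IsChain.empty : IsChain (· ≤ ·) (∅ : Set α)).exists_maxChain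
  obtain ⟨ℓ, hℓ⟩ := hc₀.isChain.exists_int_le_iff (hd.finite_inter_Icc hsc hc₀)
  obtain ⟨θ, hθ⟩ := hsc.exists_eqOn_isTransport hc₀
  refine ⟨ℓ '' c₀, ℓ ∘ θ, fun x => ?_, fun c hc x hx y hy => ?_, fun c hc r hr => ?_⟩
  · obtain ⟨c, hxc⟩ := Flag.exists_mem x
    obtain ⟨σ, hσ⟩ := hsc.exists_isTransport c.maxChain hc₀
    exact ⟨σ x, hσ.mapsTo hxc, by rw [Function.comp_apply, hθ c σ c.maxChain hσ hxc]⟩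
  · obtain ⟨σ, hσ⟩ := hsc.exists_isTransport hc hc₀
    rw [Function.comp_apply, Function.comp_apply, hθ c σ hc hσ hx, hθ c σ hc hσ hy,
      hℓ _ (hσ.mapsTo hx) _ (hσ.mapsTo hy), hσ.le_iff x hx y hy]
  · obtain ⟨z, hz, rfl⟩ := hr
    obtain ⟨σ, hσ⟩ := hsc.exists_isTransport hc hc₀
    obtain ⟨x, hx, rfl⟩ : z ∈ σ '' c := hσ.image_eq ▸ hz
    exact ⟨x, hx, by rw [Function.comp_apply, hθ c σ hc hσ hx]⟩

end

/-- A discrete strongly connected poset admits an R-grading (R ⊆ ℤ), and its antichain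
cutsets are exactly the level sets of that grading. -/
theorem discrete_stronglyConnected_graded_cutsets {α : Type*} [PartialOrder α]
    (hd : DiscretePoset α) (hsc : StronglyConnectedOrder α) :
    ∃ (R : Set ℤ) (ρ : α → ℤ), (∀ x, ρ x ∈ R) ∧
      (∀ c : Set α, IsMaxChain (· ≤ ·) c →
        (∀ x ∈ c, ∀ y ∈ c, x ≤ y ↔ ρ x ≤ ρ y) ∧ ∀ r ∈ R, ∃ x ∈ c, ρ x = r) ∧
      ∀ A : Set α, IsAntichainCutset A ↔ ∃ r ∈ R, A = {x | ρ x = r} ∧ A.Nonempty := by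
  obtain ⟨R, ρ, hρ⟩ := hd.exists_isGrading hsc
  exact ⟨R, ρ, hρ.mem, fun c hc => ⟨hρ.le_iff c hc, hρ.surjOn c hc⟩,
    fun _ => hρ.isAntichainCutset_iff hsc⟩
end

section
/- If P is a bounded poset of finite height such that every open interval (x,y) of P of height at least 1 is connected (as an order: any two elements are joined by a zigzag sequence x0 ≤ x1 ≥ x2 ≤ ... ≤ xn), then P is strongly connected. -/
/-!
Induct on the height of `[p, q]` to show that any two maximal chains through `p` and `q`
that agree outside `(p, q)` are joined by flips. If `(p, q)` is an antichain, each chain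
meets it in a single point, so the two chains differ by at most one flip. Otherwise take `t`
in `(p, q)` on the second chain, and a zigzag in `(p, q)` from a point of the first chain
to `t`. Each step `s ≤ s'` of the zigzag is carried out by rerouting the current chain
inside `(s, q)` or `(p, s')`, both strictly smaller intervals. This gives a chain through
`t`, which is joined to the second chain by treating the intervals `(p, t)` and `(t, q)`
in turn.
-/

open Set Relation

theorem Relation.ReflTransGen.exists_seq {β : Type*} {r : β → β → Prop} {a b : β}
    (h : ReflTransGen r a b) :
    ∃ (n : ℕ) (f : ℕ → β), f 0 = a ∧ f n = b ∧ ∀ i < n, r (f i) (f (i + 1)) := by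
  induction h using ReflTransGen.head_induction_on with
  | refl => exact ⟨0, fun _ => b, rfl, rfl, fun i hi => absurd hi i.not_lt_zero⟩
  | head hac _ ih =>
    obtain ⟨n, f, rfl, hfn, hf⟩ := ih
    refine ⟨n + 1, fun | 0 => _ | i + 1 => f i, rfl, hfn, fun i hi => ?_⟩
    rcases i with _ | i
    · exact hac
    · exact hf i (Nat.succ_lt_succ_iff.1 hi)

theorem Set.sdiff_eq_sdiff_of_subset {β : Type*} {s t A B : Set β} (hAB : A ⊆ B)
    (h : s \ A = t \ A) : s \ B = t \ B := by
  rw [← union_eq_right.2 hAB, ← sdiff_sdiff, h, sdiff_sdiff]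

theorem Set.mem_of_sdiff_eq {β : Type*} {s t A : Set β} {x : β} (h : s \ A = t \ A)
    (hx : x ∈ s) (hxA : x ∉ A) : x ∈ t :=
  (h ▸ ⟨hx, hxA⟩ : x ∈ t \ A).1

section

variable {α : Type*} [PartialOrder α]

theorem IsMaxChain.mem_of_forall_le_or_le {c : Set α} (hc : IsMaxChain (· ≤ ·) c) {z : α}
    (h : ∀ w ∈ c, z ≤ w ∨ w ≤ z) : z ∈ c :=
  (hc.2 (hc.1.insert fun w hw _ => h w hw) (subset_insert z c)).symm ▸ mem_insert z c

theorem IsChain.le_or_le_of_notMem_Ioo {c : Set α} (hc : IsChain (· ≤ ·) c) {u v w : α}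
    (hu : u ∈ c) (hv : v ∈ c) (hw : w ∈ c) (hwI : w ∉ Ioo u v) : w ≤ u ∨ v ≤ w := by
  rcases hc.total hw hu with h | h
  · exact .inl h
  rcases hc.total hw hv with h' | h'
  · rcases h.eq_or_lt with rfl | huw
    · exact .inl le_rfl
    rcases h'.lt_or_eq with hwv | rfl
    · exact absurd ⟨huw, hwv⟩ hwI
    · exact .inr le_rfl
  · exact .inr h'

theorem IsMaxChain.inter_Ioo_nonempty {c : Set α} (hc : IsMaxChain (· ≤ ·) c) {u v : α}
    (hu : u ∈ c) (hv : v ∈ c) (h : (Ioo u v).Nonempty) : (c ∩ Ioo u v).Nonempty := by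
  obtain ⟨z, hz⟩ := h
  by_contra! hcI
  have hzc : z ∈ c := hc.mem_of_forall_le_or_le fun w hw => by
    by_cases hwI : w ∈ Ioo u v
    · exact absurd (hcI.subset ⟨hw, hwI⟩) (notMem_empty w)
    rcases hc.1.le_or_le_of_notMem_Ioo hu hv hw hwI with h | h
    · exact .inr (h.trans hz.1.le)
    · exact .inl (hz.2.le.trans h)
  exact absurd (hcI.subset ⟨hzc, hz⟩) (notMem_empty z)

theorem IsMaxChain.ite_Ioo {c m : Set α} (hc : IsMaxChain (· ≤ ·) c)
    (hm : IsMaxChain (· ≤ ·) m) {u v : α} (huc : u ∈ c) (hvc : v ∈ c) (hum : u ∈ m)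
    (hvm : v ∈ m) : IsMaxChain (· ≤ ·) ((Ioo u v).ite m c) := by
  have hchain : IsChain (· ≤ ·) ((Ioo u v).ite m c) := by
    refine isChain_union.2 ⟨hm.1.mono inter_subset_left, hc.1.mono sdiff_subset, ?_⟩
    intro a ha b hb _
    rcases hc.1.le_or_le_of_notMem_Ioo huc hvc hb.1 hb.2 with h | h
    · exact .inr (h.trans ha.2.1.le)
    · exact .inl (ha.2.2.le.trans h)
  refine ⟨hchain, fun s hs hes => hes.antisymm fun z hz => ?_⟩
  have hcomp : ∀ w ∈ (Ioo u v).ite m c, z ≤ w ∨ w ≤ z := fun w hw => hs.total hz (hes hw)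
  have hus : u ∈ s := hes (.inr ⟨huc, left_notMem_Ioo⟩)
  have hvs : v ∈ s := hes (.inr ⟨hvc, right_notMem_Ioo⟩)
  by_cases hzI : z ∈ Ioo u v
  · refine .inl ⟨hm.mem_of_forall_le_or_le fun w hw => ?_, hzI⟩
    by_cases hwI : w ∈ Ioo u v
    · exact hcomp w (.inl ⟨hw, hwI⟩)
    rcases hm.1.le_or_le_of_notMem_Ioo hum hvm hw hwI with h | h
    · exact .inr (h.trans hzI.1.le)
    · exact .inl (hzI.2.le.trans h)
  · refine .inr ⟨hc.mem_of_forall_le_or_le fun w hw => ?_, hzI⟩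
    by_cases hwI : w ∈ Ioo u v
    · rcases hs.le_or_le_of_notMem_Ioo hus hvs hz hzI with h | h
      · exact .inl (h.trans hwI.1.le)
      · exact .inr (hwI.2.le.trans h)
    · exact hcomp w (.inr ⟨hw, hwI⟩)

theorem IsChain.sdiff_Ioo_eq_insert {c : Set α} (hc : IsChain (· ≤ ·) c) {p q t : α}
    (htc : t ∈ c) (ht : t ∈ Ioo p q) :
    c \ Ioo p t = insert t (c \ Ioo p q ∪ c ∩ Ioo t q) := by
  ext z
  simp only [mem_sdiff, mem_insert_iff, mem_union, mem_inter_iff, mem_Ioo]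
  constructor
  · rintro ⟨hz, hzJ⟩
    by_cases hzI : p < z ∧ z < q
    · rcases hc.total hz htc with h | h
      · exact .inl (h.eq_or_lt.resolve_right fun h' => hzJ ⟨hzI.1, h'⟩)
      · rcases h.eq_or_lt with rfl | h'
        · exact .inl rfl
        · exact .inr (.inr ⟨hz, h', hzI.2⟩)
    · exact .inr (.inl ⟨hz, hzI⟩)
  · rintro (rfl | ⟨hz, hzI⟩ | ⟨hz, hzK⟩)
    · exact ⟨htc, fun h => lt_irrefl z h.2⟩
    · exact ⟨hz, fun h => hzI ⟨h.1, h.2.trans ht.2⟩⟩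
    · exact ⟨hz, fun h => lt_asymm h.2 hzK.1⟩

theorem IsChain.eq_insert_sdiff_of_isAntichain {c A : Set α} (hc : IsChain (· ≤ ·) c)
    (hA : IsAntichain (· ≤ ·) A) {a : α} (ha : a ∈ c ∩ A) : c = insert a (c \ A) := by
  rw [insert_eq, ← (inter_subsingleton_of_isChain_of_isAntichain hc hA).eq_singleton_of_mem ha,
    inter_union_sdiff]

theorem Set.ncard_symmDiff_insert_insert {β : Type*} {s : Set β} {a b : β} (ha : a ∉ s)
    (hb : b ∉ s) (hab : a ≠ b) : (symmDiff (insert a s) (insert b s)).ncard = 2 := by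
  have : symmDiff (insert a s) (insert b s) = {a, b} := by
    ext z
    simp only [Set.mem_symmDiff, mem_insert_iff, mem_singleton_iff]
    grind
  rw [this, ncard_pair hab]

theorem Set.sdiff_Ioo_bot_top [BoundedOrder α] {s : Set α}
    (hb : ⊥ ∈ s) (ht : ⊤ ∈ s) : s \ Ioo ⊥ ⊤ = {⊥, ⊤} := by
  ext z
  simp only [mem_sdiff, mem_Ioo, bot_lt_iff_ne_bot, lt_top_iff_ne_top, mem_insert_iff,
    mem_singleton_iff]
  grind

theorem forall_chain_ncard_le_of_insert {s : Set α} {r : α} {n : ℕ} (hr : r ∉ s)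
    (hrs : ∀ z ∈ s, z ≤ r ∨ r ≤ z)
    (h : ∀ e ⊆ insert r s, IsChain (· ≤ ·) e → e.ncard ≤ n + 1) :
    ∀ e ⊆ s, IsChain (· ≤ ·) e → e.ncard ≤ n := by
  intro e hes he
  rcases e.finite_or_infinite with hfin | hinf
  · have := h _ (insert_subset_insert hes) (he.insert fun z hz _ => (hrs z (hes hz)).symm)
    rw [ncard_insert_of_notMem (fun hre => hr (hes hre)) hfin] at this
    omega
  · simp [hinf.ncard]

def MaxChainFlip (c d : Set α) : Prop :=
  IsMaxChain (· ≤ ·) d ∧ (symmDiff c d).ncard = 2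

def FlipConnectedOnIoo (p q : α) : Prop :=
  ∀ c d : Set α, IsMaxChain (· ≤ ·) c → IsMaxChain (· ≤ ·) d → p ∈ c → q ∈ c →
    c \ Ioo p q = d \ Ioo p q → ReflTransGen MaxChainFlip c d

theorem FlipConnectedOnIoo.exists_maxChain_mem {u v t : α} (huv : FlipConnectedOnIoo u v)
    {c : Set α} (hc : IsMaxChain (· ≤ ·) c) (hu : u ∈ c) (hv : v ∈ c) (ht : t ∈ Ioo u v) :
    ∃ c', IsMaxChain (· ≤ ·) c' ∧ t ∈ c' ∧ c' \ Ioo u v = c \ Ioo u v ∧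
      ReflTransGen MaxChainFlip c c' := by
  have hch : IsChain (· ≤ ·) ({u, t, v} : Set α) :=
    (IsChain.singleton.insert fun _ hb _ => .inl (hb ▸ ht.2.le)).insert fun _ hb _ =>
      .inl (by rcases hb with rfl | rfl; exacts [ht.1.le, (ht.1.trans ht.2).le])
  obtain ⟨m, hm, hsub⟩ := hch.exists_maxChain
  have hc' := hc.ite_Ioo hm hu hv (hsub (by simp)) (hsub (by simp))
  have hdiff : (Ioo u v).ite m c \ Ioo u v = c \ Ioo u v := ite_sdiff_self _ _ _
  exact ⟨_, hc', .inl ⟨hsub (by simp), ht⟩, hdiff, huv c _ hc hc' hu hv hdiff.symm⟩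

theorem reflTransGen_maxChainFlip_of_isAntichain_Ioo {c d : Set α} (hc : IsMaxChain (· ≤ ·) c)
    (hd : IsMaxChain (· ≤ ·) d) {p q : α} (hp : p ∈ c) (hq : q ∈ c)
    (hcd : c \ Ioo p q = d \ Ioo p q) (hI : IsAntichain (· ≤ ·) (Ioo p q)) :
    ReflTransGen MaxChainFlip c d := by
  rcases (Ioo p q).eq_empty_or_nonempty with hIe | hIne
  · rw [hIe, sdiff_empty, sdiff_empty] at hcd
    exact hcd ▸ .refl
  obtain ⟨a, ha⟩ := hc.inter_Ioo_nonempty hp hq hIne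
  obtain ⟨b, hb⟩ := hd.inter_Ioo_nonempty (mem_of_sdiff_eq hcd hp left_notMem_Ioo)
    (mem_of_sdiff_eq hcd hq right_notMem_Ioo) hIne
  have hca := hc.1.eq_insert_sdiff_of_isAntichain hI ha
  have hdb := hd.1.eq_insert_sdiff_of_isAntichain hI hb
  rw [← hcd] at hdb
  rcases eq_or_ne a b with rfl | hab
  · exact hca.trans hdb.symm ▸ .refl
  · refine .single ⟨hd, ?_⟩
    rw [hca, hdb]
    exact ncard_symmDiff_insert_insert (fun h => h.2 ha.2) (fun h => h.2 hb.2) hab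

theorem exists_maxChain_mem_of_zigzag {p q : α}
    (hsub : ∀ m ∈ Ioo p q, FlipConnectedOnIoo p m ∧ FlipConnectedOnIoo m q) {c : Set α}
    (hc : IsMaxChain (· ≤ ·) c) (hp : p ∈ c) (hq : q ∈ c) {a t : α} (ha : a ∈ c)
    (hat : ReflTransGen (fun u v => u ∈ Ioo p q ∧ v ∈ Ioo p q ∧ (u ≤ v ∨ v ≤ u)) a t) :
    ∃ c', IsMaxChain (· ≤ ·) c' ∧ t ∈ c' ∧ c' \ Ioo p q = c \ Ioo p q ∧
      ReflTransGen MaxChainFlip c c' := by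
  induction hat with
  | refl => exact ⟨c, hc, ha, rfl, .refl⟩
  | @tail s t _ hst ih =>
    obtain ⟨c₁, hc₁, hs, hc₁c, hcc₁⟩ := ih
    obtain ⟨hsI, htI, hst⟩ := hst
    have hp₁ : p ∈ c₁ := mem_of_sdiff_eq hc₁c.symm hp left_notMem_Ioo
    have hq₁ : q ∈ c₁ := mem_of_sdiff_eq hc₁c.symm hq right_notMem_Ioo
    suffices ∃ c₂, IsMaxChain (· ≤ ·) c₂ ∧ t ∈ c₂ ∧ c₂ \ Ioo p q = c₁ \ Ioo p q ∧
        ReflTransGen MaxChainFlip c₁ c₂ by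
      obtain ⟨c₂, hc₂, ht, hc₂c₁, hc₁c₂⟩ := this
      exact ⟨c₂, hc₂, ht, hc₂c₁.trans hc₁c, hcc₁.trans hc₁c₂⟩
    rcases eq_or_ne s t with rfl | hne
    · exact ⟨c₁, hc₁, hs, rfl, .refl⟩
    rcases hst with h | h
    · obtain ⟨c₂, hc₂, ht, hc₂c₁, hc₁c₂⟩ :=
        (hsub s hsI).2.exists_maxChain_mem hc₁ hs hq₁ ⟨h.lt_of_ne hne, htI.2⟩
      exact ⟨c₂, hc₂, ht, sdiff_eq_sdiff_of_subset (Ioo_subset_Ioo_left hsI.1.le) hc₂c₁, hc₁c₂⟩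
    · obtain ⟨c₂, hc₂, ht, hc₂c₁, hc₁c₂⟩ :=
        (hsub s hsI).1.exists_maxChain_mem hc₁ hp₁ hs ⟨htI.1, h.lt_of_ne hne.symm⟩
      exact ⟨c₂, hc₂, ht, sdiff_eq_sdiff_of_subset (Ioo_subset_Ioo_right hsI.2.le) hc₂c₁, hc₁c₂⟩

theorem reflTransGen_maxChainFlip_of_mem_Ioo {p q t : α} (ht : t ∈ Ioo p q)
    (hpt : FlipConnectedOnIoo p t) (htq : FlipConnectedOnIoo t q) {c d : Set α}
    (hc : IsMaxChain (· ≤ ·) c) (hd : IsMaxChain (· ≤ ·) d) (hp : p ∈ c) (hq : q ∈ c)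
    (htc : t ∈ c) (htd : t ∈ d) (hcd : c \ Ioo p q = d \ Ioo p q) :
    ReflTransGen MaxChainFlip c d := by
  have hqd : q ∈ d := mem_of_sdiff_eq hcd hq right_notMem_Ioo
  set e := (Ioo t q).ite d c
  have he : IsMaxChain (· ≤ ·) e := hc.ite_Ioo hd htc hq htd hqd
  have hec : e \ Ioo t q = c \ Ioo t q := ite_sdiff_self _ _ _
  have hte : t ∈ e := .inr ⟨htc, left_notMem_Ioo⟩
  have hpe : p ∈ e := .inr ⟨hp, fun h => lt_asymm ht.1 h.1⟩
  have hed' : e ∩ Ioo t q = d ∩ Ioo t q := ite_inter_self _ _ _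
  have hed : e \ Ioo p t = d \ Ioo p t := by
    rw [he.1.sdiff_Ioo_eq_insert hte ht, hd.1.sdiff_Ioo_eq_insert htd ht,
      sdiff_eq_sdiff_of_subset (Ioo_subset_Ioo_left ht.1.le) hec, hcd, hed']
  exact (htq c e hc he htc hq hec.symm).trans (hpt e d he hd hpe hte hed)

theorem flipConnectedOnIoo_of_forall_mem_Ioo {p q : α}
    (hconn : (∃ u ∈ Ioo p q, ∃ v ∈ Ioo p q, u < v) → ∀ a ∈ Ioo p q, ∀ b ∈ Ioo p q,
      ReflTransGen (fun u v => u ∈ Ioo p q ∧ v ∈ Ioo p q ∧ (u ≤ v ∨ v ≤ u)) a b)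
    (hsub : ∀ m ∈ Ioo p q, FlipConnectedOnIoo p m ∧ FlipConnectedOnIoo m q) :
    FlipConnectedOnIoo p q := by
  intro c d hc hd hp hq hcd
  by_cases hchain : ∃ u ∈ Ioo p q, ∃ v ∈ Ioo p q, u < v
  · have hI : (Ioo p q).Nonempty := let ⟨u, hu, _⟩ := hchain; ⟨u, hu⟩
    obtain ⟨a, hac, haI⟩ := hc.inter_Ioo_nonempty hp hq hI
    obtain ⟨t, htd, htI⟩ := hd.inter_Ioo_nonempty (mem_of_sdiff_eq hcd hp left_notMem_Ioo)
      (mem_of_sdiff_eq hcd hq right_notMem_Ioo) hI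
    obtain ⟨c', hc', htc', hc'c, hcc'⟩ :=
      exists_maxChain_mem_of_zigzag hsub hc hp hq hac (hconn hchain a haI t htI)
    exact hcc'.trans <| reflTransGen_maxChainFlip_of_mem_Ioo htI (hsub t htI).1 (hsub t htI).2
      hc' hd (mem_of_sdiff_eq hc'c.symm hp left_notMem_Ioo)
      (mem_of_sdiff_eq hc'c.symm hq right_notMem_Ioo) htc' htd (hc'c.trans hcd)
  · exact reflTransGen_maxChainFlip_of_isAntichain_Ioo hc hd hp hq hcd
      (isAntichain_iff_forall_not_lt.2 fun u hu v hv huv => hchain ⟨u, hu, v, hv, huv⟩)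

theorem flipConnectedOnIoo_of_chain_ncard_le
    (hconn : ∀ x y : α, (∃ u ∈ Ioo x y, ∃ v ∈ Ioo x y, u < v) →
      ∀ a ∈ Ioo x y, ∀ b ∈ Ioo x y,
        ReflTransGen (fun u v => u ∈ Ioo x y ∧ v ∈ Ioo x y ∧ (u ≤ v ∨ v ≤ u)) a b)
    (n : ℕ) : ∀ {p q : α}, (∀ e ⊆ Icc p q, IsChain (· ≤ ·) e → e.ncard ≤ n) →
      FlipConnectedOnIoo p q := by
  induction n with
  | zero =>
    intro p q h
    refine flipConnectedOnIoo_of_forall_mem_Ioo (hconn p q) fun m hm => ?_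
    simpa using h {m} (singleton_subset_iff.2 (Ioo_subset_Icc_self hm)) IsChain.singleton
  | succ n ih =>
    intro p q h
    refine flipConnectedOnIoo_of_forall_mem_Ioo (hconn p q) fun m hm => ⟨ih ?_, ih ?_⟩
    · refine forall_chain_ncard_le_of_insert (r := q) (fun h' => hm.2.not_ge h'.2)
        (fun z hz => .inl (hz.2.trans hm.2.le)) fun e he => h e (he.trans ?_)
      exact insert_subset ⟨(hm.1.trans hm.2).le, le_rfl⟩ (Icc_subset_Icc_right hm.2.le)
    · refine forall_chain_ncard_le_of_insert (r := p) (fun h' => hm.1.not_ge h'.1)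
        (fun z hz => .inr (hm.1.le.trans hz.1)) fun e he => h e (he.trans ?_)
      exact insert_subset ⟨le_rfl, (hm.1.trans hm.2).le⟩ (Icc_subset_Icc_left hm.1.le)

end

/-- A bounded poset of finite height whose open intervals of height at least 1 are all
connected is strongly connected. -/
theorem stronglyConnected_of_connected_open_intervals {α : Type*} [PartialOrder α]
    [BoundedOrder α]
    (hht : ∃ N : ℕ, ∀ c : Set α, IsChain (· ≤ ·) c → c.Finite ∧ c.ncard ≤ N)
    (hconn : ∀ x y : α, (∃ u ∈ Set.Ioo x y, ∃ v ∈ Set.Ioo x y, u < v) →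
      ∀ a ∈ Set.Ioo x y, ∀ b ∈ Set.Ioo x y,
        Relation.ReflTransGen
          (fun u v => u ∈ Set.Ioo x y ∧ v ∈ Set.Ioo x y ∧ (u ≤ v ∨ v ≤ u)) a b) :
    StronglyConnectedOrder α := by
  obtain ⟨N, hN⟩ := hht
  have hbt : FlipConnectedOnIoo (⊥ : α) ⊤ :=
    flipConnectedOnIoo_of_chain_ncard_le hconn N fun e _ he => (hN e he).2
  intro c d hc hd
  have hcd : c \ Ioo ⊥ ⊤ = d \ Ioo ⊥ ⊤ := by
    rw [sdiff_Ioo_bot_top hc.bot_mem hc.top_mem, sdiff_Ioo_bot_top hd.bot_mem hd.top_mem]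
  obtain ⟨n, f, hf0, hfn, hf⟩ := (hbt c d hc hd hc.bot_mem hc.top_mem hcd).exists_seq
  refine ⟨n, f, hf0, hfn, fun i hi => ?_, fun i hi => (hf i hi).2⟩
  rcases i with _ | i
  · exact hf0 ▸ hc
  · exact (hf i hi).1
end

section
/- If P is a finite graded bounded lattice admitting an EL-labeling, then the antichain cutsets of P are exactly the level sets (sets of elements of a fixed rank). -/
/-- The word of labels along a chain, listed as a list of elements. -/
def chainWord {α Λ : Type*} (l : α → α → Λ) (L : List α) : List Λ :=
  (L.zip L.tail).map fun p => l p.1 p.2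

/-- A saturated chain from x to y: a list starting at x, ending at y, each step a cover. -/
def IsSaturatedChain {α : Type*} [PartialOrder α] (x y : α) (L : List α) : Prop :=
  L.head? = some x ∧ L.getLast? = some y ∧ L.Chain' (· ⋖ ·)

/-- An EL-labeling (with labels compared by `le`, `lt`): on each interval [x,y] there is
a unique ascending maximal chain, which lexicographically strictly precedes every other
maximal chain of [x,y]. -/
def IsELLabeling {α Λ : Type*} [PartialOrder α] (le lt : Λ → Λ → Prop)
    (l : α → α → Λ) : Prop :=
  ∀ x y : α, x ≤ y →
    ∃ L : List α, IsSaturatedChain x y L ∧ (chainWord l L).Chain' le ∧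
      ∀ M : List α, IsSaturatedChain x y M → M ≠ L →
        ¬ (chainWord l M).Chain' le ∧ List.Lex lt (chainWord l L) (chainWord l M)
section Graded

variable {α : Type*} [PartialOrder α] {r : α → ℕ}

theorem StrictMono.injOn_of_isChain {β : Type*} [Preorder β] {f : α → β} (hf : StrictMono f)
    {c : Set α} (hc : IsChain (· ≤ ·) c) : Set.InjOn f c := by
  intro x hx y hy hxy
  by_contra hne
  rcases hc hx hy hne with h | h
  · exact (hf (h.lt_of_ne hne)).ne hxy
  · exact (hf (h.lt_of_ne (Ne.symm hne))).ne hxy.symm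

variable [Finite α]

theorem strictMono_of_covBy_succ (hr : ∀ x y : α, x ⋖ y → r y = r x + 1) : StrictMono r := by
  classical
  have := Fintype.ofFinite α
  let := Fintype.toLocallyFiniteOrder (α := α)
  exact (strictMono_iff_forall_covBy r).2 fun x y hxy => (hr x y hxy).symm ▸ Nat.lt_succ_self _

theorem IsMaxChain.exists_covBy_mem {c : Set α} (hc : IsMaxChain (· ≤ ·) c) {x y : α}
    (hx : x ∈ c) (hy : y ∈ c) (hxy : x < y) : ∃ z ∈ c, x ⋖ z := by
  let s := Flag.ofIsMaxChain c hc
  obtain ⟨z, hz, -⟩ := exists_covBy_le_of_lt (a := (⟨x, hx⟩ : s)) (b := ⟨y, hy⟩) hxy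
  exact ⟨z, z.2, Flag.coe_covBy_coe.2 hz⟩

variable [BoundedOrder α]

theorem IsMaxChain.exists_rank_eq (hr : ∀ x y : α, x ⋖ y → r y = r x + 1) {c : Set α}
    (hc : IsMaxChain (· ≤ ·) c) {k : ℕ} (hbot : r ⊥ ≤ k) (htop : k ≤ r ⊤) :
    ∃ x ∈ c, r x = k := by
  induction k, hbot using Nat.le_induction with
  | base => exact ⟨⊥, hc.bot_mem, rfl⟩
  | succ k _ ih =>
    obtain ⟨x, hx, rfl⟩ := ih (by omega)
    have hxtop : x < ⊤ := lt_top_iff_ne_top.2 fun h => by rw [h] at htop; omega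
    obtain ⟨z, hz, hxz⟩ := hc.exists_covBy_mem hx hc.top_mem hxtop
    exact ⟨z, hz, hr x z hxz⟩

theorem isAntichainCutset_setOf_rank_eq (hr : ∀ x y : α, x ⋖ y → r y = r x + 1) {k : ℕ}
    (hbot : r ⊥ ≤ k) (htop : k ≤ r ⊤) : IsAntichainCutset {x | r x = k} := by
  intro c hc
  obtain ⟨x, hx, hxk⟩ := hc.exists_rank_eq hr hbot htop
  refine ⟨x, ⟨hx, hxk⟩, fun y ⟨hy, hyk⟩ => ?_⟩
  exact (strictMono_of_covBy_succ hr).injOn_of_isChain hc.isChain hy hx (hyk.trans hxk.symm)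

end Graded

namespace IsSaturatedChain

variable {α : Type*} [PartialOrder α] {r : α → ℕ} {x y z w : α} {L M : List α}

theorem ne_nil (h : IsSaturatedChain x y L) : L ≠ [] := by
  rintro rfl
  simp [IsSaturatedChain] at h

theorem singleton_iff : IsSaturatedChain x y [z] ↔ z = x ∧ z = y := by
  simp [IsSaturatedChain, List.Chain']

theorem cons_cons_iff : IsSaturatedChain x z (w :: y :: L) ↔
    w = x ∧ x ⋖ y ∧ IsSaturatedChain y z (y :: L) := by
  simp only [IsSaturatedChain, List.head?_cons, Option.some.injEq, List.getLast?_cons_cons,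
    List.Chain', List.isChain_cons_cons, true_and]
  constructor
  · rintro ⟨rfl, hlast, hxy, hchain⟩
    exact ⟨rfl, hxy, hlast, hchain⟩
  · rintro ⟨rfl, hxy, hlast, hchain⟩
    exact ⟨rfl, hlast, hxy, hchain⟩

theorem add_length (hr : ∀ x y : α, x ⋖ y → r y = r x + 1) (h : IsSaturatedChain x y L) :
    r x + L.length = r y + 1 := by
  induction L generalizing x with
  | nil => exact absurd rfl h.ne_nil
  | cons w L ih =>
    rcases L with - | ⟨v, L⟩
    · obtain ⟨rfl, rfl⟩ := singleton_iff.1 h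
      rfl
    · obtain ⟨rfl, hwv, hv⟩ := cons_cons_iff.1 h
      have := ih hv
      simp only [List.length_cons] at this ⊢
      rw [hr w v hwv] at this
      omega

theorem exists_rank_eq (hr : ∀ x y : α, x ⋖ y → r y = r x + 1) (h : IsSaturatedChain x y L)
    {k : ℕ} (hxk : r x ≤ k) (hky : k ≤ r y) : ∃ z ∈ L, r z = k := by
  induction L generalizing x with
  | nil => exact absurd rfl h.ne_nil
  | cons w L ih =>
    rcases L with - | ⟨v, L⟩
    · obtain ⟨rfl, rfl⟩ := singleton_iff.1 h
      exact ⟨w, List.mem_singleton_self w, by omega⟩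
    · obtain ⟨rfl, hwv, hv⟩ := cons_cons_iff.1 h
      rcases hxk.eq_or_lt with rfl | hlt
      · exact ⟨w, List.mem_cons_self, rfl⟩
      · obtain ⟨z, hz, hzk⟩ := ih hv (by rw [hr w v hwv]; omega)
        exact ⟨z, List.mem_cons_of_mem w hz, hzk⟩

theorem isChain (h : IsSaturatedChain x y L) : IsChain (· ≤ ·) {z | z ∈ L} := by
  have hlt : L.Pairwise (· < ·) :=
    List.isChain_iff_pairwise.1 (h.2.2.imp fun _ _ hab => hab.lt)
  have : Std.Symm fun p q : α => p ≤ q ∨ q ≤ p := ⟨fun _ _ => Or.symm⟩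
  exact fun a ha b hb hab => List.Pairwise.forall (R := fun p q : α => p ≤ q ∨ q ≤ p)
    (hlt.imp fun h => Or.inl h.le) ha hb hab

theorem isMaxChain [Finite α] [BoundedOrder α] (hr : ∀ x y : α, x ⋖ y → r y = r x + 1)
    (h : IsSaturatedChain ⊥ ⊤ L) : IsMaxChain (· ≤ ·) {z | z ∈ L} := by
  refine ⟨h.isChain, fun t ht hLt => Set.Subset.antisymm hLt fun z hz => ?_⟩
  have hmono := strictMono_of_covBy_succ hr
  obtain ⟨w, hw, hwz⟩ := h.exists_rank_eq hr (hmono.monotone bot_le) (hmono.monotone le_top)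
  rwa [hmono.injOn_of_isChain ht hz (hLt hw) hwz.symm]

theorem append (hL : IsSaturatedChain x y L) (hM : IsSaturatedChain y z (y :: M)) :
    IsSaturatedChain x z (L ++ M) := by
  obtain ⟨hLhead, hLlast, hLchain⟩ := hL
  obtain ⟨-, hMlast, hMchain⟩ := hM
  obtain ⟨hyM, hMchain⟩ := List.isChain_cons.1 hMchain
  refine ⟨?_, ?_, List.isChain_append.2 ⟨hLchain, hMchain, ?_⟩⟩
  · rw [List.head?_append, hLhead, Option.some_or]
  · rcases M with - | ⟨v, M⟩ <;> simp_all [List.getLast?_append]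
  · intro a ha
    obtain rfl := Option.mem_some_iff.1 (hLlast ▸ ha)
    exact hyM

theorem finite_setOf [Finite α] (hr : ∀ x y : α, x ⋖ y → r y = r x + 1) (x y : α) :
    {L : List α | IsSaturatedChain x y L}.Finite :=
  (List.finite_length_le α (r y + 1 - r x)).subset fun L hL =>
    show L.length ≤ _ by have := add_length hr hL; omega

end IsSaturatedChain

theorem IsELLabeling.exists_isSaturatedChain_mem {α Λ : Type*} [PartialOrder α] [BoundedOrder α]
    {le lt : Λ → Λ → Prop} {l : α → α → Λ} (hEL : IsELLabeling le lt l) (x : α) :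
    ∃ L : List α, IsSaturatedChain ⊥ ⊤ L ∧ x ∈ L := by
  obtain ⟨L, hL, -⟩ := hEL ⊥ x bot_le
  obtain ⟨M, hM, -⟩ := hEL x ⊤ le_top
  obtain ⟨M, rfl⟩ : ∃ M', M = x :: M' := by
    rcases M with - | ⟨y, M⟩
    · exact absurd rfl hM.ne_nil
    · exact ⟨M, by rw [Option.some.inj hM.1]⟩
  exact ⟨L ++ M, hL.append hM, List.mem_append_left M (List.mem_of_getLast? hL.2.1)⟩

theorem List.Lex.cons_cons_of_pair {β : Type*} {R : β → β → Prop} {a b c d : β}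
    (h : List.Lex R [a, b] [c, d]) (v : List β) : List.Lex R (a :: b :: v) (c :: d :: v) := by
  cases h with
  | rel hac => exact .rel hac
  | cons h =>
    cases h with
    | rel hbd => exact .cons (.rel hbd)
    | cons h => cases h

section Labeling

variable {α Λ : Type*} {l : α → α → Λ}

theorem chainWord_cons_cons (x y : α) (L : List α) :
    chainWord l (x :: y :: L) = l x y :: chainWord l (y :: L) := rfl

theorem chainWord_append_cons (P Q : List α) (a : α) :
    chainWord l (P ++ a :: Q) = chainWord l (P ++ [a]) ++ chainWord l (a :: Q) := by
  induction P with
  | nil => rfl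
  | cons p P ih =>
    rcases P with - | ⟨q, P⟩
    · rfl
    · simp only [List.cons_append, chainWord_cons_cons] at ih ⊢
      rw [ih]

theorem exists_descent_of_not_isChain_chainWord {R : Λ → Λ → Prop} {L : List α}
    (h : ¬ (chainWord l L).IsChain R) :
    ∃ P S a b c, L = P ++ a :: b :: c :: S ∧ ¬ R (l a b) (l b c) := by
  induction L with
  | nil => exact absurd List.IsChain.nil h
  | cons x L ih =>
    rcases L with - | ⟨y, - | ⟨z, S⟩⟩
    · exact absurd List.IsChain.nil h
    · exact absurd (List.IsChain.singleton _) h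
    · rw [chainWord_cons_cons, chainWord_cons_cons, List.isChain_cons_cons,
        ← chainWord_cons_cons] at h
      by_cases hxyz : R (l x y) (l y z)
      · obtain ⟨P, S', a, b, c, hL, hR⟩ := ih fun h' => h ⟨hxyz, h'⟩
        exact ⟨x :: P, S', a, b, c, by rw [hL]; rfl, hR⟩
      · exact ⟨[], S, x, y, z, rfl, hxyz⟩

variable [PartialOrder α] {r : α → ℕ}

theorem IsELLabeling.exists_covBy_lex_lt [LE Λ] [LT Λ]
    (hEL : IsELLabeling (· ≤ ·) (· < ·) l) (hr : ∀ x y : α, x ⋖ y → r y = r x + 1)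
    {a b c : α} (hab : a ⋖ b) (hbc : b ⋖ c) (hdesc : ¬ l a b ≤ l b c) :
    ∃ b', a ⋖ b' ∧ b' ⋖ c ∧ List.Lex (· < ·) [l a b', l b' c] [l a b, l b c] := by
  obtain ⟨M, hM, hMasc, hMmin⟩ := hEL a c (hab.le.trans hbc.le)
  have habc : IsSaturatedChain a c [a, b, c] :=
    IsSaturatedChain.cons_cons_iff.2 ⟨rfl, hab,
      IsSaturatedChain.cons_cons_iff.2 ⟨rfl, hbc,
        IsSaturatedChain.singleton_iff.2 ⟨rfl, rfl⟩⟩⟩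
  have hne : [a, b, c] ≠ M := by
    rintro rfl
    exact hdesc (List.isChain_cons_cons.1 hMasc).1
  have hlen : M.length = 3 := by
    have := hM.add_length hr
    have := habc.add_length hr
    simp only [List.length_cons, List.length_nil] at *
    omega
  obtain ⟨a', b', c', rfl⟩ := List.length_eq_three.1 hlen
  obtain ⟨rfl, hab', hb'⟩ := IsSaturatedChain.cons_cons_iff.1 hM
  obtain ⟨-, hb'c', hc'⟩ := IsSaturatedChain.cons_cons_iff.1 hb'
  obtain ⟨-, rfl⟩ := IsSaturatedChain.singleton_iff.1 hc'
  exact ⟨b', hab', hb'c', (hMmin _ habc hne).2⟩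

theorem IsELLabeling.exists_swap_lex_lt [LE Λ] [LT Λ]
    (hEL : IsELLabeling (· ≤ ·) (· < ·) l) (hr : ∀ x y : α, x ⋖ y → r y = r x + 1)
    {x y : α} {L : List α} (hL : IsSaturatedChain x y L)
    (hdesc : ¬ (chainWord l L).IsChain (· ≤ ·)) :
    ∃ P S a b b' c, L = P ++ a :: b :: c :: S ∧ r b' = r b ∧
      IsSaturatedChain x y (P ++ a :: b' :: c :: S) ∧
      List.Lex (· < ·) (chainWord l (P ++ a :: b' :: c :: S)) (chainWord l L) := by
  obtain ⟨P, S, a, b, c, rfl, hlabel⟩ := exists_descent_of_not_isChain_chainWord hdesc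
  obtain ⟨hhead, hlast, hchain⟩ := hL
  obtain ⟨hPa, hab, hbcS⟩ := List.isChain_append_cons_cons.1 hchain
  obtain ⟨hbc, hcS⟩ := List.isChain_cons_cons.1 hbcS
  obtain ⟨b', hab', hb'c, hlex⟩ := hEL.exists_covBy_lex_lt hr hab hbc hlabel
  refine ⟨P, S, a, b, b', c, rfl, by rw [hr a b' hab', hr a b hab], ⟨?_, ?_, ?_⟩, ?_⟩
  · simpa [List.head?_append] using hhead
  · simpa [List.getLast?_append] using hlast
  · exact List.isChain_append_cons_cons.2 ⟨hPa, hab', List.isChain_cons_cons.2 ⟨hb'c, hcS⟩⟩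
  · rw [chainWord_append_cons P (b' :: c :: S), chainWord_append_cons P (b :: c :: S),
      chainWord_cons_cons, chainWord_cons_cons, chainWord_cons_cons, chainWord_cons_cons]
    exact List.Lex.append_left _ (hlex.cons_cons_of_pair _) _

end Labeling

namespace IsAntichainCutset

variable {α : Type*} [PartialOrder α] {A : Set α}

theorem apply_eq_of_subset_insert {β : Type*} (f : α → β) (hA : IsAntichainCutset A)
    {c d : Set α} (hc : IsMaxChain (· ≤ ·) c) (hd : IsMaxChain (· ≤ ·) d) {b b' : α}
    (hbb' : f b = f b') (hcd : c ⊆ insert b d) (hdc : d ⊆ insert b' c) {x y : α}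
    (hx : x ∈ c) (hxA : x ∈ A) (hy : y ∈ d) (hyA : y ∈ A) : f x = f y := by
  rcases hcd hx with rfl | hxd
  · rcases hdc hy with rfl | hyc
    · exact hbb'
    · rw [(hA c hc).unique ⟨hx, hxA⟩ ⟨hyc, hyA⟩]
  · rw [(hA d hd).unique ⟨hxd, hxA⟩ ⟨hy, hyA⟩]

theorem rank_eq_of_mem_isSaturatedChain {Λ : Type*} [Finite α] [BoundedOrder α] [Preorder Λ]
    {l : α → α → Λ} (hEL : IsELLabeling (· ≤ ·) (· < ·) l) {r : α → ℕ}
    (hr : ∀ x y : α, x ⋖ y → r y = r x + 1) (hA : IsAntichainCutset A) {L M : List α}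
    (hL : IsSaturatedChain ⊥ ⊤ L) (hM : IsSaturatedChain ⊥ ⊤ M) {x y : α}
    (hx : x ∈ L) (hxA : x ∈ A) (hy : y ∈ M) (hyA : y ∈ A) : r x = r y := by
  obtain ⟨L₀, hL₀, -, hL₀min⟩ := hEL ⊥ ⊤ bot_le
  obtain ⟨z, ⟨hz, hzA⟩, -⟩ := hA _ (hL₀.isMaxChain hr)
  suffices key : ∀ L, IsSaturatedChain ⊥ ⊤ L → ∀ x ∈ L, x ∈ A → r x = r z from
    (key L hL x hx hxA).trans (key M hM y hy hyA).symm
  let lexLT : List α → List α → Prop := fun M N =>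
    List.Lex (· < ·) (chainWord l M) (chainWord l N)
  have : IsStrictOrder (List α) lexLT :=
    { irrefl := fun _ => List.lt_irrefl _, trans := fun _ _ _ => List.lt_trans }
  intro L hL
  refine ((IsSaturatedChain.finite_setOf hr ⊥ ⊤).wellFoundedOn (r := lexLT)).induction hL
    (P := fun L => ∀ x ∈ L, x ∈ A → r x = r z) ?_
  intro L hL ih x hx hxA
  by_cases hLL₀ : L = L₀
  · subst hLL₀
    rw [(hA _ (hL.isMaxChain hr)).unique ⟨hx, hxA⟩ ⟨hz, hzA⟩]
  obtain ⟨P, S, a, b, b', c, rfl, hbb', hL', hlex⟩ :=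
    hEL.exists_swap_lex_lt hr hL (hL₀min L hL hLL₀).1
  obtain ⟨y, ⟨hy, hyA⟩, -⟩ := hA _ (hL'.isMaxChain hr)
  rw [← ih _ hL' hlex y hy hyA]
  refine hA.apply_eq_of_subset_insert r (hL.isMaxChain hr) (hL'.isMaxChain hr) hbb'.symm
    ?_ ?_ hx hxA hy hyA <;> intro w <;>
    simp only [Set.mem_ofPred_eq, Set.mem_insert_iff, List.mem_append, List.mem_cons] <;> tauto

end IsAntichainCutset

theorem antichain_cutsets_of_ELLabeled_lattice_general {α Λ : Type*} [Lattice α] [BoundedOrder α]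
    [Fintype α] [PartialOrder Λ] (l : α → α → Λ)
    (hEL : IsELLabeling (· ≤ ·) (· < ·) l)
    (r : α → ℕ) (hr : ∀ x y : α, x ⋖ y → r y = r x + 1) :
    ∀ A : Set α, IsAntichainCutset A ↔ ∃ k : ℕ, A = {x | r x = k} ∧ A.Nonempty := by
  intro A
  have hmono := strictMono_of_covBy_succ hr
  constructor
  · intro hA
    obtain ⟨L₀, hL₀, -⟩ := hEL ⊥ ⊤ bot_le
    obtain ⟨z, ⟨hz, hzA⟩, -⟩ := hA _ (hL₀.isMaxChain hr)
    refine ⟨r z, Set.ext fun x => ?_, z, hzA⟩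
    obtain ⟨L, hL, hxL⟩ := hEL.exists_isSaturatedChain_mem x
    refine ⟨fun hxA => hA.rank_eq_of_mem_isSaturatedChain hEL hr hL hL₀ hxL hxA hz hzA,
      fun hxz => ?_⟩
    obtain ⟨y, ⟨hy, hyA⟩, -⟩ := hA _ (hL.isMaxChain hr)
    have hyz := hA.rank_eq_of_mem_isSaturatedChain hEL hr hL hL₀ hy hyA hz hzA
    rwa [hmono.injOn_of_isChain hL.isChain hxL hy (hxz.trans hyz.symm)]
  · rintro ⟨k, rfl, x, rfl⟩
    exact isAntichainCutset_setOf_rank_eq hr (hmono.monotone bot_le) (hmono.monotone le_top)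

/-- In a finite graded bounded lattice with an EL-labeling, the antichain cutsets are
exactly the (nonempty) level sets of the rank function. -/
theorem antichain_cutsets_of_ELLabeled_lattice {α Λ : Type*} [Lattice α] [BoundedOrder α]
    [Fintype α] [PartialOrder Λ] (l : α → α → Λ)
    (hEL : IsELLabeling (· ≤ ·) (· < ·) l)
    (r : α → ℕ) (hr : ∀ x y : α, x ⋖ y → r y = r x + 1) (hr0 : r ⊥ = 0) :
    ∀ A : Set α, IsAntichainCutset A ↔ ∃ k : ℕ, A = {x | r x = k} ∧ A.Nonempty :=
  antichain_cutsets_of_ELLabeled_lattice_general l hEL r hr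
end

section
/- The antichain cutsets of a finite Boolean lattice (the power set of a finite set, ordered by inclusion) are exactly the level sets, i.e., the collections of all subsets of a fixed cardinality. -/
section Aux

variable {S : Type*} [Fintype S] [DecidableEq S]

lemma chain_le_of_card_le {c : Set (Finset S)} (hc : IsChain (· ≤ ·) c)
    {x y : Finset S} (hx : x ∈ c) (hy : y ∈ c) (h : x.card ≤ y.card) : x ⊆ y := by
  rcases eq_or_ne x y with rfl | hne
  · exact le_refl x
  rcases hc hx hy hne with h1 | h1
  · exact h1
  · exact le_of_eq (Finset.eq_of_subset_of_card_le h1 h).symm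

lemma chain_eq_of_card_eq {c : Set (Finset S)} (hc : IsChain (· ≤ ·) c)
    {x y : Finset S} (hx : x ∈ c) (hy : y ∈ c) (h : x.card = y.card) : x = y :=
  Finset.Subset.antisymm (chain_le_of_card_le hc hx hy h.le)
    (chain_le_of_card_le hc hy hx h.ge)

lemma maxchain_mem_of_forall_comp {c : Set (Finset S)} (hc : IsMaxChain (· ≤ ·) c)
    {z : Finset S} (h : ∀ w ∈ c, w ≠ z → z ≤ w ∨ w ≤ z) : z ∈ c := by
  by_contra hz
  have hch : IsChain (· ≤ ·) (insert z c) :=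
    hc.1.insert (fun b hb hne => h b hb (Ne.symm hne))
  have := hc.2 hch (Set.subset_insert _ _)
  exact hz (this ▸ Set.mem_insert z c)

lemma maxchain_bot_mem {c : Set (Finset S)} (hc : IsMaxChain (· ≤ ·) c) :
    (∅ : Finset S) ∈ c :=
  maxchain_mem_of_forall_comp hc (fun w _ _ => Or.inl (Finset.empty_subset w))

lemma maxchain_top_mem {c : Set (Finset S)} (hc : IsMaxChain (· ≤ ·) c) :
    (Finset.univ : Finset S) ∈ c :=
  maxchain_mem_of_forall_comp hc (fun w _ _ => Or.inr (Finset.subset_univ w))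

lemma maxChain_exists_card {c : Set (Finset S)} (hc : IsMaxChain (· ≤ ·) c)
    {k : ℕ} (hk : k ≤ Fintype.card S) : ∃ x ∈ c, x.card = k := by
  by_contra hcon
  push_neg at hcon
  have hbot : (∅ : Finset S) ∈ c := maxchain_bot_mem hc
  have htop : (Finset.univ : Finset S) ∈ c := maxchain_top_mem hc
  have hk0 : 0 < k := by
    have := hcon ∅ hbot; simp only [Finset.card_empty] at this; omega
  have hkn : k < Fintype.card S := by
    have := hcon Finset.univ htop; rw [Finset.card_univ] at this; omega
  set L : Set (Finset S) := {x | x ∈ c ∧ x.card < k} with hL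
  set U : Set (Finset S) := {x | x ∈ c ∧ k < x.card} with hU
  have hLU : ∀ w ∈ c, w ∈ L ∨ w ∈ U := by
    intro w hw
    rcases lt_or_gt_of_ne (hcon w hw) with h | h
    · exact Or.inl ⟨hw, h⟩
    · exact Or.inr ⟨hw, h⟩
  have hLne : L.Nonempty := ⟨∅, hbot, by simpa using hk0⟩
  have hUne : U.Nonempty := ⟨Finset.univ, htop, by simpa using hkn⟩
  obtain ⟨x, hxL, hxmax⟩ := Set.exists_max_image L Finset.card (Set.toFinite L) hLne
  obtain ⟨y, hyU, hymin⟩ := Set.exists_min_image U Finset.card (Set.toFinite U) hUne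
  have hxy : x ⊆ y := chain_le_of_card_le hc.1 hxL.1 hyU.1 (le_of_lt (hxL.2.trans hyU.2))
  have hnyx : ¬ y ⊆ x := fun hs =>
    absurd (Finset.card_le_card hs) (not_le.2 (hxL.2.trans hyU.2))
  obtain ⟨a, hay, hax⟩ := Finset.not_subset.1 hnyx
  set z := insert a x with hz
  have hzcard : z.card = x.card + 1 := Finset.card_insert_of_notMem hax
  have hzy : z ⊆ y := Finset.insert_subset hay hxy
  have hzc : z ∉ c := by
    intro hzmem
    rcases hLU z hzmem with hz' | hz'
    · have := hxmax z hz'; omega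
    · have := hcon z hzmem
      have h2 := hz'.2
      have h3 := hxL.2
      omega
  apply hzc
  apply maxchain_mem_of_forall_comp hc
  intro w hw _
  rcases hLU w hw with hw' | hw'
  · right
    exact (chain_le_of_card_le hc.1 hw'.1 hxL.1 (hxmax w hw')).trans
      (Finset.subset_insert _ _)
  · left
    exact hzy.trans (chain_le_of_card_le hc.1 hyU.1 hw'.1 (hymin w hw'))

lemma isMaxChain_of_levels {c : Set (Finset S)} (hc : IsChain (· ≤ ·) c)
    (h : ∀ k ≤ Fintype.card S, ∃ x ∈ c, x.card = k) : IsMaxChain (· ≤ ·) c := by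
  refine ⟨hc, fun t ht hct => Set.Subset.antisymm hct ?_⟩
  intro w hw
  obtain ⟨x, hxc, hxcard⟩ := h w.card (Finset.card_le_univ w)
  have : x = w := chain_eq_of_card_eq ht (hct hxc) hw hxcard
  exact this ▸ hxc

lemma swap_mem {A : Set (Finset S)} (hA : IsAntichainCutset A) {x : Finset S}
    (hx : x ∈ A) {a b : S} (ha : a ∈ x) (hb : b ∉ x) : insert b (x.erase a) ∈ A := by
  set x' := insert b (x.erase a) with hx'def
  have hbe : b ∉ x.erase a := fun h => hb (Finset.mem_of_mem_erase h)
  have hxpos : 1 ≤ x.card := Finset.card_pos.2 ⟨a, ha⟩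
  have hcard' : x'.card = x.card := by
    rw [hx'def, Finset.card_insert_of_notMem hbe, Finset.card_erase_of_mem ha]
    omega
  have hab : a ≠ b := fun e => hb (e ▸ ha)
  have hax' : a ∉ x' := by
    simp only [hx'def, Finset.mem_insert, Finset.mem_erase]
    push_neg
    exact ⟨hab, fun h => absurd rfl h⟩
  have hxx' : x ≠ x' := fun e => hax' (e ▸ ha)
  have h1 : x.erase a ⊆ x' := Finset.subset_insert _ _
  have h2 : x' ⊆ insert b x := Finset.insert_subset_insert _ (Finset.erase_subset _ _)
  have h3 : x.erase a ⊆ x := Finset.erase_subset _ _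
  have h4 : x ⊆ insert b x := Finset.subset_insert _ _
  have h13 : x.erase a ⊆ insert b x := h1.trans h2
  have hch : IsChain (· ≤ ·) ({x.erase a, x', insert b x} : Set (Finset S)) := by
    intro p hp q hq _
    simp only [Set.mem_insert_iff, Set.mem_singleton_iff] at hp hq
    rcases hp with rfl | rfl | rfl <;> rcases hq with rfl | rfl | rfl <;>
      first
        | exact Or.inl (le_refl _)
        | exact Or.inl h1 | exact Or.inl h2 | exact Or.inl h13
        | exact Or.inr h1 | exact Or.inr h2 | exact Or.inr h13
  obtain ⟨c, hc, hsub⟩ := hch.exists_maxChain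
  have hec : x.erase a ∈ c := hsub (by simp)
  have hx'c : x' ∈ c := hsub (by simp)
  have hic : insert b x ∈ c := hsub (by simp)
  have hcarde : (x.erase a).card = x.card - 1 := Finset.card_erase_of_mem ha
  have hcardi : (insert b x).card = x.card + 1 := Finset.card_insert_of_notMem hb
  have hxc : x ∉ c := fun hxc => hxx' (chain_eq_of_card_eq hc.1 hxc hx'c hcard'.symm)
  set d := insert x (c \ {x'}) with hd
  have hdchain : IsChain (· ≤ ·) d := by
    apply (hc.1.mono Set.diff_subset).insert
    intro w hw _
    obtain ⟨hwc, hwx'⟩ := hw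
    have hwx' : w ≠ x' := hwx'
    have hwcard : w.card ≠ x.card := fun e =>
      hwx' (chain_eq_of_card_eq hc.1 hwc hx'c (e.trans hcard'.symm))
    rcases lt_or_gt_of_ne hwcard with hlt | hgt
    · right
      exact (chain_le_of_card_le hc.1 hwc hec (by omega)).trans h3
    · left
      exact h4.trans (chain_le_of_card_le hc.1 hic hwc (by omega))
  have hdmax : IsMaxChain (· ≤ ·) d := by
    apply isMaxChain_of_levels hdchain
    intro k hk
    obtain ⟨w, hwc, hwcard⟩ := maxChain_exists_card hc hk
    by_cases hwx' : w = x'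
    · exact ⟨x, Set.mem_insert _ _, by rw [← hwcard, hwx', hcard']⟩
    · exact ⟨w, Set.mem_insert_of_mem _ ⟨hwc, hwx'⟩, hwcard⟩
  obtain ⟨z, ⟨hzc, hzA⟩, hzu⟩ := hA c hc
  obtain ⟨z', ⟨hz'd, hz'A⟩, hz'u⟩ := hA d hdmax
  have hz'x : z' = x := (hz'u x ⟨Set.mem_insert _ _, hx⟩).symm
  by_cases hzx' : z = x'
  · exact hzx' ▸ hzA
  · exfalso
    have hzd : z ∈ d := Set.mem_insert_of_mem _ ⟨hzc, hzx'⟩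
    have hzz' : z = z' := hz'u z ⟨hzd, hzA⟩
    exact hxc ((hzz'.trans hz'x) ▸ hzc)

lemma transfer {A : Set (Finset S)} (hA : IsAntichainCutset A) :
    ∀ m (x y : Finset S), x ∈ A → (y \ x).card = m → y.card = x.card → y ∈ A := by
  intro m
  induction m using Nat.strong_induction_on with
  | _ m ih =>
    intro x y hx hm hcard
    by_cases hxy : y = x
    · exact hxy ▸ hx
    · have h1 : ¬ y ⊆ x := fun h => hxy (Finset.eq_of_subset_of_card_le h hcard.ge)
      have h2 : ¬ x ⊆ y := fun h =>
        hxy (Finset.eq_of_subset_of_card_le h hcard.le).symm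
      obtain ⟨b, hby, hbx⟩ := Finset.not_subset.1 h1
      obtain ⟨a, hax, hay⟩ := Finset.not_subset.1 h2
      set x' := insert b (x.erase a) with hx'def
      have hx'A : x' ∈ A := swap_mem hA hx hax hbx
      have hbe : b ∉ x.erase a := fun h => hbx (Finset.mem_of_mem_erase h)
      have hxpos : 1 ≤ x.card := Finset.card_pos.2 ⟨a, hax⟩
      have hcard' : x'.card = x.card := by
        rw [hx'def, Finset.card_insert_of_notMem hbe, Finset.card_erase_of_mem hax]
        omega
      have hkey : y \ x' = (y \ x).erase b := by
        ext s
        simp only [hx'def, Finset.mem_sdiff, Finset.mem_erase, Finset.mem_insert]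
        have hne : s ∈ y → s ≠ a := fun hs e => hay (e ▸ hs)
        tauto
      have hbmem : b ∈ y \ x := Finset.mem_sdiff.2 ⟨hby, hbx⟩
      have hlt : (y \ x').card < m := by
        rw [hkey, Finset.card_erase_of_mem hbmem, hm]
        have : 0 < (y \ x).card := Finset.card_pos.2 ⟨b, hbmem⟩
        omega
      exact ih _ hlt x' y hx'A rfl (hcard.trans hcard'.symm)

end Aux

/-- In a finite Boolean lattice (powerset of a finite set), the antichain cutsets are
exactly the level sets: families of all subsets of a fixed cardinality. -/
theorem antichain_cutsets_boolean {S : Type*} [Fintype S] [DecidableEq S]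
    (A : Set (Finset S)) :
    IsAntichainCutset A ↔ ∃ k ≤ Fintype.card S, A = {T : Finset S | T.card = k} := by
  constructor
  · intro hA
    have hch0 : IsChain (· ≤ ·) (∅ : Set (Finset S)) := by
      intro a ha; cases ha
    obtain ⟨c0, hc0, _⟩ := hch0.exists_maxChain
    obtain ⟨x0, ⟨hx0c, hx0A⟩, _⟩ := hA c0 hc0
    refine ⟨x0.card, Finset.card_le_univ _, ?_⟩
    ext t
    simp only [Set.mem_setOf_eq]
    constructor
    · intro htA
      have hchs : IsChain (· ≤ ·) ({t} : Set (Finset S)) :=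
        Set.subsingleton_singleton.isChain
      obtain ⟨c, hc, hsub⟩ := hchs.exists_maxChain
      have htc : t ∈ c := hsub rfl
      obtain ⟨z, ⟨hzc, hzA⟩, hzu⟩ := hA c hc
      obtain ⟨w, hwc, hwcard⟩ := maxChain_exists_card hc (Finset.card_le_univ x0)
      have hwA : w ∈ A := transfer hA _ x0 w hx0A rfl hwcard
      have h1 : t = z := hzu t ⟨htc, htA⟩
      have h2 : w = z := hzu w ⟨hwc, hwA⟩
      rw [h1, ← h2, hwcard]
    · intro htcard
      exact transfer hA _ x0 t hx0A rfl htcard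
  · rintro ⟨k, hk, rfl⟩
    intro c hc
    obtain ⟨w, hwc, hwcard⟩ := maxChain_exists_card hc hk
    refine ⟨w, ⟨hwc, hwcard⟩, ?_⟩
    rintro v ⟨hvc, hvcard⟩
    exact chain_eq_of_card_eq hc.1 hvc hwc (hvcard.trans hwcard.symm)
end

section
/- The antichain cutsets of the lattice of subspaces of a finite-dimensional vector space over a finite field are exactly the level sets, i.e., the sets of all subspaces of a fixed dimension. -/
/-!
Along a maximal chain of subspaces the dimension goes up by exactly one at each step, from `⊥`
to `⊤`, so every level set meets every maximal chain exactly once. Conversely, let `A` be an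
antichain cutset containing `W`, and let `W'` meet `W` in a common hyperplane `H`. In a maximal
chain through `H ⋖ W ⋖ W ⊔ W'` one may exchange `W` for `W'`; the new chain must meet `A`, and
can only do so in `W'` because the old one meets `A` only in `W`. Any two subspaces of the same
dimension are joined by a path of such exchanges (the Grassmann graph is connected), so `A`
contains a level set, and a cutset containing another cutset equals it.
-/
section Order

variable {α : Type*} [PartialOrder α] {a b b' d y : α} {c : Set α}

theorem IsMaxChain.mem_of_isChain_insert (hc : IsMaxChain (· ≤ ·) c)
    (h : IsChain (· ≤ ·) (insert y c)) : y ∈ c :=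
  (hc.2 h (Set.subset_insert _ _)).symm ▸ Set.mem_insert _ _

theorem IsMaxChain.covBy_of_lt (hc : IsMaxChain (· ≤ ·) c) (ha : a ∈ c) (hab : a < b)
    (hnext : ∀ z ∈ c, a < z → b ≤ z) : a ⋖ b := by
  refine ⟨hab, fun z haz hzb => ?_⟩
  have hzc : z ∈ c := hc.mem_of_isChain_insert <| hc.1.insert fun y hy _ => by
    by_cases hay : a < y
    · exact .inl (hzb.le.trans (hnext y hy hay))
    · exact .inr ((hc.1.le_of_not_gt ha hy hay).trans haz.le)
  exact (hnext z hzc haz).not_gt hzb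

theorem le_or_eq_or_le_of_covBy_of_covBy (hab : a ⋖ b) (hbd : b ⋖ d)
    (ha : y ≤ a ∨ a ≤ y) (hb : b ≤ y ∨ y ≤ b) (hd : d ≤ y ∨ y ≤ d) :
    y ≤ a ∨ y = b ∨ d ≤ y := by
  rcases ha with ha | ha
  · exact .inl ha
  rcases hd with hd | hd
  · exact .inr (.inr hd)
  rcases hb with hb | hb
  · rcases hbd.eq_or_eq hb hd with rfl | rfl
    · exact .inr (.inl rfl)
    · exact .inr (.inr le_rfl)
  · rcases hab.eq_or_eq ha hb with rfl | rfl
    · exact .inl le_rfl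
    · exact .inr (.inl rfl)

theorem IsMaxChain.insert_diff_singleton (hc : IsMaxChain (· ≤ ·) c) (ha : a ∈ c) (hb : b ∈ c)
    (hd : d ∈ c) (hab : a ⋖ b) (hbd : b ⋖ d) (hab' : a ⋖ b') (hb'd : b' ⋖ d) :
    IsMaxChain (· ≤ ·) (insert b' (c \ {b})) := by
  have hc_split : ∀ y ∈ c, y ≠ b → y ≤ a ∨ d ≤ y := fun y hy hyb =>
    (le_or_eq_or_le_of_covBy_of_covBy hab hbd (hc.1.total hy ha) (hc.1.total hb hy)
      (hc.1.total hd hy)).imp_right (Or.resolve_left · hyb)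
  refine ⟨(hc.1.mono Set.sdiff_subset).insert fun y hy _ => ?_, fun t ht hsub => ?_⟩
  · rcases hc_split y hy.1 hy.2 with h | h
    · exact .inr (h.trans hab'.le)
    · exact .inl (hb'd.le.trans h)
  refine hsub.antisymm fun z hz => ?_
  have hmem : ∀ y ∈ c, y ≠ b → y ∈ t := fun y hy hyb => hsub (.inr ⟨hy, hyb⟩)
  have hz_mem : z ≤ a ∨ d ≤ z → z ∈ c \ {b} := fun hz' => by
    refine ⟨hc.mem_of_isChain_insert (hc.1.insert fun y hy _ => ?_), ?_⟩
    · rcases eq_or_ne y b with rfl | hyb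
      · rcases hz' with h | h
        exacts [.inl (h.trans hab.le), .inr (hbd.le.trans h)]
      · exact ht.total hz (hmem y hy hyb)
    · rintro rfl
      rcases hz' with h | h
      exacts [hab.lt.not_ge h, hbd.lt.not_ge h]
  rcases le_or_eq_or_le_of_covBy_of_covBy hab' hb'd (ht.total hz (hmem a ha hab.lt.ne))
    (ht.total (hsub (Set.mem_insert _ _)) hz) (ht.total (hmem d hd hbd.lt.ne') hz) with h | rfl | h
  · exact .inr (hz_mem (.inl h))
  · exact Set.mem_insert _ _
  · exact .inr (hz_mem (.inr h))

end Order

namespace IsAntichainCutset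

variable {α : Type*} [PartialOrder α] {A B : Set α}

theorem eq_of_subset (hB : IsAntichainCutset B) (hA : IsAntichainCutset A) (hBA : B ⊆ A) :
    B = A := by
  refine hBA.antisymm fun a ha => ?_
  obtain ⟨c, hc, hac⟩ := (IsChain.singleton : IsChain (· ≤ ·) {a}).exists_maxChain
  obtain ⟨b, ⟨hbc, hbB⟩, -⟩ := hB c hc
  rwa [(hA c hc).unique ⟨hac rfl, ha⟩ ⟨hbc, hBA hbB⟩]

theorem mem_of_covBy (hA : IsAntichainCutset A) {a b b' d : α} (hb : b ∈ A) (hab : a ⋖ b)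
    (hbd : b ⋖ d) (hab' : a ⋖ b') (hb'd : b' ⋖ d) : b' ∈ A := by
  have habd : IsChain (· ≤ ·) ({a, b, d} : Set α) :=
    (IsChain.pair hbd.le).insert fun y hy _ => by
      rcases hy with rfl | rfl
      exacts [.inl hab.le, .inl (hab.le.trans hbd.le)]
  obtain ⟨c, hc, habdc⟩ := habd.exists_maxChain
  have ha : a ∈ c := habdc (by simp)
  have hb' : b ∈ c := habdc (by simp)
  have hd : d ∈ c := habdc (by simp)
  obtain ⟨x, ⟨hxc, hxA⟩, -⟩ := hA _ (hc.insert_diff_singleton ha hb' hd hab hbd hab' hb'd)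
  rcases hxc with rfl | ⟨hxc, hxb⟩
  · exact hxA
  · exact absurd ((hA c hc).unique ⟨hxc, hxA⟩ ⟨hb', hb⟩) hxb

end IsAntichainCutset

theorem IsAntichainCutset.mem_of_inf_covBy {α : Type*} [Lattice α] [IsWeakUpperModularLattice α]
    {A : Set α} (hA : IsAntichainCutset A) {a b : α} (ha : a ∈ A) (hinf_a : a ⊓ b ⋖ a)
    (hinf_b : a ⊓ b ⋖ b) : b ∈ A :=
  hA.mem_of_covBy ha hinf_a (covBy_sup_of_inf_covBy_of_inf_covBy_left hinf_a hinf_b) hinf_b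
    (covBy_sup_of_inf_covBy_of_inf_covBy_right hinf_a hinf_b)

namespace Submodule

open Module

variable {K V : Type*} [DivisionRing K] [AddCommGroup V] [Module K V] [FiniteDimensional K V]

theorem covBy_iff_finrank_eq_add_one {U W : Submodule K V} :
    U ⋖ W ↔ U ≤ W ∧ finrank K W = finrank K U + 1 := by
  constructor
  · intro h
    obtain ⟨v, hvW, hvU⟩ := SetLike.exists_of_lt h.lt
    have hUv : U < U ⊔ span K {v} :=
      left_lt_sup.2 fun hle => hvU (hle (mem_span_singleton_self v))
    have hUvW : U ⊔ span K {v} = W :=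
      (h.eq_or_eq hUv.le (sup_le h.le ((span_singleton_le_iff_mem v W).2 hvW))).resolve_left
        hUv.ne'
    exact ⟨h.le, hUvW ▸ finrank_sup_span_singleton hvU⟩
  · rintro ⟨hUW, hrank⟩
    refine ⟨hUW.lt_of_ne fun h => by rw [h] at hrank; omega, fun X hUX hXW => ?_⟩
    have := finrank_lt_finrank_of_lt hUX
    have := finrank_lt_finrank_of_lt hXW
    omega

theorem _root_.IsMaxChain.exists_finrank_eq {c : Set (Submodule K V)} (hc : IsMaxChain (· ≤ ·) c)
    {m : ℕ} (hm : m ≤ finrank K V) : ∃ X ∈ c, finrank K X = m := by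
  induction m with
  | zero => exact ⟨⊥, hc.bot_mem, finrank_bot K V⟩
  | succ m ih =>
    obtain ⟨X, hXc, rfl⟩ := ih (by omega)
    have hXtop : X < ⊤ := lt_top_iff_ne_top.2 fun h => by rw [h, finrank_top] at hm; omega
    obtain ⟨Y, ⟨hYc, hXY⟩, hYmin⟩ :=
      wellFounded_lt.has_min {Y | Y ∈ c ∧ X < Y} ⟨⊤, hc.top_mem, hXtop⟩
    have hcov : X ⋖ Y := hc.covBy_of_lt hXc hXY fun Z hZc hXZ =>
      hc.1.le_of_not_gt hZc hYc (hYmin Z ⟨hZc, hXZ⟩)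
    exact ⟨Y, hYc, (covBy_iff_finrank_eq_add_one.1 hcov).2⟩

theorem isAntichainCutset_setOf_finrank_eq {k : ℕ} (hk : k ≤ finrank K V) :
    IsAntichainCutset {W : Submodule K V | finrank K W = k} := fun c hc => by
  obtain ⟨X, hXc, hX⟩ := hc.exists_finrank_eq hk
  refine ⟨X, ⟨hXc, hX⟩, fun Y ⟨hYc, hY⟩ => ?_⟩
  rcases hc.1.total hYc hXc with h | h
  · exact eq_of_le_of_finrank_eq h (hY.trans hX.symm)
  · exact (eq_of_le_of_finrank_eq h (hX.trans hY.symm)).symm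

theorem mem_of_finrank_eq_of_forall_inf_covBy {A : Set (Submodule K V)}
    (hA : ∀ ⦃W W'⦄, W ∈ A → W ⊓ W' ⋖ W → W ⊓ W' ⋖ W' → W' ∈ A) {W W' : Submodule K V}
    (hW : W ∈ A) (hWW' : finrank K W' = finrank K W) : W' ∈ A := by
  induction hn : finrank K W' - finrank K ↥(W ⊓ W') using Nat.strong_induction_on generalizing W
    with | _ n ih =>
  rcases eq_or_ne W W' with rfl | hne
  · exact hW
  have hW'W : ¬ W' ≤ W := fun h => hne (eq_of_le_of_finrank_eq h hWW').symm
  have hinf_lt : W ⊓ W' < W :=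
    inf_le_left.lt_of_ne fun h => hne (eq_of_le_of_finrank_eq (inf_eq_left.1 h) hWW'.symm)
  obtain ⟨H, hH, hHW⟩ := exists_le_covBy_of_lt hinf_lt
  obtain ⟨v, hvW', hvW⟩ := SetLike.not_le_iff_exists.1 hW'W
  -- `W''` is adjacent to `W` and meets `W'` in a strictly larger subspace than `W` does
  set W'' := H ⊔ span K {v}
  have hvW'' : v ∈ W'' := mem_sup_right (mem_span_singleton_self v)
  have hHW'' : H ⋖ W'' := covBy_iff_finrank_eq_add_one.2
    ⟨le_sup_left, finrank_sup_span_singleton fun hvH => hvW (hHW.le hvH)⟩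
  have hW''W : finrank K W'' = finrank K W := by
    rw [(covBy_iff_finrank_eq_add_one.1 hHW'').2, (covBy_iff_finrank_eq_add_one.1 hHW).2]
  have hWW'' : W ⊓ W'' = H := by
    refine ((hHW.eq_or_eq (le_inf hHW.le le_sup_left) inf_le_left).resolve_right fun h => ?_)
    exact hvW ((eq_of_le_of_finrank_eq (inf_eq_left.1 h) hW''W.symm) ▸ hvW'')
  have hW''A : W'' ∈ A := hA hW (hWW'' ▸ hHW) (hWW'' ▸ hHW'')
  have hcloser : W ⊓ W' < W'' ⊓ W' :=
    (le_inf (hH.trans le_sup_left) inf_le_right).lt_of_ne fun h =>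
      hvW (mem_inf.1 (show v ∈ W ⊓ W' from h ▸ mem_inf.2 ⟨hvW'', hvW'⟩)).1
  have := finrank_lt_finrank_of_lt hcloser
  have := finrank_mono (inf_le_right : W'' ⊓ W' ≤ W')
  exact ih _ (by omega) hW''A (hWW'.trans hW''W.symm) rfl

end Submodule

theorem antichain_cutsets_subspace_lattice_general {K V : Type*} [Field K]
    [AddCommGroup V] [Module K V] [FiniteDimensional K V] (A : Set (Submodule K V)) :
    IsAntichainCutset A ↔
      ∃ k ≤ Module.finrank K V, A = {W : Submodule K V | Module.finrank K W = k} := by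
  constructor
  · intro hA
    obtain ⟨W₀, ⟨-, hW₀⟩, -⟩ := hA _ (maxChain_spec (r := (· ≤ ·)))
    have hk := Submodule.finrank_le W₀
    refine ⟨_, hk, ((Submodule.isAntichainCutset_setOf_finrank_eq hk).eq_of_subset hA ?_).symm⟩
    exact fun W hW => Submodule.mem_of_finrank_eq_of_forall_inf_covBy
      (fun _ _ => hA.mem_of_inf_covBy) hW₀ hW
  · rintro ⟨k, hk, rfl⟩
    exact Submodule.isAntichainCutset_setOf_finrank_eq hk

/-- In the subspace lattice of a finite-dimensional vector space over a finite field,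
the antichain cutsets are exactly the sets of subspaces of a fixed dimension. -/
theorem antichain_cutsets_subspace_lattice {K V : Type*} [Field K] [Fintype K]
    [AddCommGroup V] [Module K V] [FiniteDimensional K V] (A : Set (Submodule K V)) :
    IsAntichainCutset A ↔
      ∃ k ≤ Module.finrank K V, A = {W : Submodule K V | Module.finrank K W = k} :=
  antichain_cutsets_subspace_lattice_general A
end

section
/- In a finite semimodular lattice L with join-irreducibles linearly ordered by a well-order ≺ extending the lattice order, the map assigning to each cover relation x ⋖ y the ≺-least join-irreducible z with x ∨ z = y is an EL-labeling of L. -/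
section

open Set

variable {α : Type*}

section SaturatedChain

variable [PartialOrder α] {x y a b : α} {t L : List α}

lemma isSaturatedChain_iff :
    IsSaturatedChain x y L ↔ L.head? = some x ∧ L.getLast? = some y ∧ L.IsChain (· ⋖ ·) :=
  Iff.rfl

@[simp]
lemma not_isSaturatedChain_nil : ¬ IsSaturatedChain x y ([] : List α) := by
  simp [isSaturatedChain_iff]

@[simp]
lemma isSaturatedChain_singleton : IsSaturatedChain x y [a] ↔ a = x ∧ x = y := by
  simp only [isSaturatedChain_iff, List.head?_cons, List.getLast?_singleton, Option.some.injEq,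
    List.isChain_singleton, and_true]
  constructor <;> rintro ⟨rfl, rfl⟩ <;> exact ⟨rfl, rfl⟩

@[simp]
lemma isSaturatedChain_cons_cons :
    IsSaturatedChain x y (a :: b :: t) ↔ a = x ∧ a ⋖ b ∧ IsSaturatedChain b y (b :: t) := by
  simp [isSaturatedChain_iff, and_left_comm]

lemma IsSaturatedChain.exists_eq_cons (h : IsSaturatedChain x y L) : ∃ t, L = x :: t := by
  obtain ⟨hx, -⟩ := h
  match L, hx with
  | x :: t, rfl => exact ⟨t, rfl⟩

@[elab_as_elim]
lemma IsSaturatedChain.induction {P : α → List α → Prop} (h : IsSaturatedChain x y L)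
    (single : P y [y])
    (cons : ∀ a b t, a ⋖ b → IsSaturatedChain b y (b :: t) → P b (b :: t) → P a (a :: b :: t)) :
    P x L := by
  induction L generalizing x with
  | nil => simp at h
  | cons a t ih =>
    match t, h with
    | [], h => obtain ⟨rfl, rfl⟩ := isSaturatedChain_singleton.1 h; exact single
    | b :: t, h =>
      obtain ⟨rfl, hab, hb⟩ := isSaturatedChain_cons_cons.1 h
      exact cons a b t hab hb (ih hb)

lemma IsSaturatedChain.le (h : IsSaturatedChain x y L) : x ≤ y :=
  h.induction le_rfl fun _ _ _ hab _ ih => hab.le.trans ih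

lemma IsSaturatedChain.eq_singleton (h : IsSaturatedChain x x L) : L = [x] := by
  obtain ⟨t, rfl⟩ := h.exists_eq_cons
  match t, h with
  | [], _ => rfl
  | b :: _, h =>
    obtain ⟨-, hxb, hb⟩ := isSaturatedChain_cons_cons.1 h
    exact absurd hb.le hxb.lt.not_ge

lemma IsSaturatedChain.exists_eq_cons_cons (h : IsSaturatedChain x y L) (hxy : x ≠ y) :
    ∃ b t, L = x :: b :: t ∧ x ⋖ b ∧ IsSaturatedChain b y (b :: t) := by
  obtain ⟨t, rfl⟩ := h.exists_eq_cons
  match t, h with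
  | [], h => exact absurd (isSaturatedChain_singleton.1 h).2 hxy
  | b :: t, h => exact ⟨b, t, rfl, (isSaturatedChain_cons_cons.1 h).2⟩

end SaturatedChain

section ChainWord

variable {Λ : Type*} (l : α → α → Λ) (a b : α) (t : List α)

@[simp] lemma chainWord_singleton : chainWord l [a] = [] := rfl

@[simp] lemma chainWord_cons_cons_s14 : chainWord l (a :: b :: t) = l a b :: chainWord l (b :: t) :=
  rfl

end ChainWord

lemma exists_supIrred_le_not_le [SemilatticeSup α] [OrderBot α] [WellFoundedLT α] {x y : α}
    (h : ¬ y ≤ x) : ∃ a, SupIrred a ∧ a ≤ y ∧ ¬ a ≤ x := by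
  obtain ⟨s, rfl, hs⟩ := exists_supIrred_decomposition y
  by_contra! H
  exact h (Finset.sup_le fun a ha => H a (hs ha) (Finset.le_sup (f := id) ha))

lemma inf_covBy_of_forall_lt_le [Lattice α] {x z : α} (hzx : ¬ z ≤ x) (h : ∀ c < z, c ≤ x) :
    x ⊓ z ⋖ z :=
  ⟨inf_le_right.lt_of_ne fun heq => hzx (heq ▸ inf_le_left),
    fun c hc hcz => hc.not_ge (le_inf (h c hcz) hcz.le)⟩

lemma preimage_Iic_diff_Iic_mono {Λ : Type*} [Preorder α] {e : Λ → α} {x y x' y' : α}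
    (hx : x' ≤ x) (hy : y ≤ y') : e ⁻¹' (Iic y \ Iic x) ⊆ e ⁻¹' (Iic y' \ Iic x') :=
  preimage_mono (sdiff_subset_sdiff (Iic_subset_Iic.2 hy) (Iic_subset_Iic.2 hx))

section Labeling

-- Labels live in a linear order `Λ` and are read in the lattice through `e`. For the theorem, `Λ`
-- is the subtype of join-irreducibles, whose labelling order is not the one induced from `α`.
variable {Λ : Type*} [Lattice α] [LinearOrder Λ] {e : Λ → α} {x y m : α} {L M : List α} {z : Λ}

lemma exists_isLeast_preimage_Iic_diff_Iic [OrderBot α] [WellFoundedLT α] [Finite Λ]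
    (hgen : ∀ a : α, SupIrred a → a ∈ range e) (h : ¬ y ≤ x) :
    ∃ z, IsLeast (e ⁻¹' (Iic y \ Iic x)) z := by
  obtain ⟨a, ha, hay, hax⟩ := exists_supIrred_le_not_le h
  obtain ⟨w, rfl⟩ := hgen a ha
  exact ⟨_, wellFounded_lt.min_mem (e ⁻¹' (Iic y \ Iic x)) ⟨w, hay, hax⟩,
    fun _ hv => wellFounded_lt.min_le hv⟩

lemma covBy_sup_of_isLeast [OrderBot α] [WellFoundedLT α] [IsUpperModularLattice α]
    (hgen : ∀ a : α, SupIrred a → a ∈ range e) (hext : ∀ v w, e v < e w → v < w)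
    (hz : IsLeast (e ⁻¹' (Iic y \ Iic x)) z) : x ⋖ x ⊔ e z := by
  refine covBy_sup_of_inf_covBy_right (inf_covBy_of_forall_lt_le hz.1.2 fun c hc => ?_)
  by_contra hcx
  obtain ⟨a, ha, hac, hax⟩ := exists_supIrred_le_not_le hcx
  obtain ⟨w, rfl⟩ := hgen a ha
  exact (hext w z (hac.trans_lt hc)).not_ge (hz.2 ⟨hac.trans (hc.le.trans hz.1.1), hax⟩)

variable (e) in
def IsLeastSupLabeling (l : α → α → Λ) : Prop :=
  ∀ x y : α, x ⋖ y → x ⊔ e (l x y) = y ∧ ∀ z, x ⊔ e z = y → l x y ≤ z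

namespace IsLeastSupLabeling

variable {l : α → α → Λ}

lemma sup_label (hl : IsLeastSupLabeling e l) (h : x ⋖ y) : x ⊔ e (l x y) = y :=
  (hl x y h).1

lemma isLeast_label (hl : IsLeastSupLabeling e l) (h : x ⋖ y) :
    IsLeast (e ⁻¹' (Iic y \ Iic x)) (l x y) := by
  refine ⟨⟨le_sup_right.trans (hl.sup_label h).le, fun hle => h.ne ?_⟩,
    fun w hw => (hl x y h).2 w ?_⟩
  · rw [← hl.sup_label h, sup_eq_left.2 hle]
  · exact (h.eq_or_eq le_sup_left (sup_le h.le hw.1)).resolve_left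
      fun heq => hw.2 (le_sup_right.trans heq.le)

lemma label_sup_eq (hl : IsLeastSupLabeling e l) (hxy : x ≤ y)
    (hz : IsLeast (e ⁻¹' (Iic y \ Iic x)) z) (hcov : x ⋖ x ⊔ e z) : l x (x ⊔ e z) = z :=
  le_antisymm ((hl.isLeast_label hcov).2 ⟨le_sup_right, hz.1.2⟩)
    (hz.2 (preimage_Iic_diff_Iic_mono le_rfl (sup_le hxy hz.1.1) (hl.isLeast_label hcov).1))

lemma mem_of_mem_chainWord (hl : IsLeastSupLabeling e l) (h : IsSaturatedChain x y L) :
    ∀ w ∈ chainWord l L, w ∈ e ⁻¹' (Iic y \ Iic x) := by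
  refine h.induction (by simp) fun a b t hab hb ih w hw => ?_
  rcases List.mem_cons.1 hw with rfl | hw
  · exact preimage_Iic_diff_Iic_mono le_rfl hb.le (hl.isLeast_label hab).1
  · exact preimage_Iic_diff_Iic_mono hab.le le_rfl (ih w hw)

lemma exists_label_le (hl : IsLeastSupLabeling e l) (h : IsSaturatedChain x y L) :
    ∀ z ∈ e ⁻¹' (Iic y \ Iic x), ∃ w ∈ chainWord l L, w ≤ z := by
  refine h.induction (fun z hz => absurd hz.1 hz.2) fun a b t hab _ ih z hz => ?_
  by_cases hzb : e z ≤ b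
  · exact ⟨l a b, List.mem_cons_self, (hl.isLeast_label hab).2 ⟨hzb, hz.2⟩⟩
  · obtain ⟨w, hw, hwz⟩ := ih z ⟨hz.1, hzb⟩
    exact ⟨w, List.mem_cons_of_mem _ hw, hwz⟩

lemma isLeast_head_label (hl : IsLeastSupLabeling e l) {t : List α}
    (h : IsSaturatedChain x y (x :: m :: t))
    (hinc : (chainWord l (x :: m :: t)).IsChain (· ≤ ·)) :
    IsLeast (e ⁻¹' (Iic y \ Iic x)) (l x m) := by
  refine ⟨hl.mem_of_mem_chainWord h _ List.mem_cons_self, fun z hz => ?_⟩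
  obtain ⟨w, hw, hwz⟩ := hl.exists_label_le h z hz
  rw [chainWord_cons_cons_s14] at hinc hw
  rcases List.mem_cons.1 hw with rfl | hw
  · exact hwz
  · exact ((List.pairwise_cons.1 (List.isChain_iff_pairwise.1 hinc)).1 w hw).trans hwz

lemma eq_of_isChain_le (hl : IsLeastSupLabeling e l) (hL : IsSaturatedChain x y L)
    (hLinc : (chainWord l L).IsChain (· ≤ ·)) (hM : IsSaturatedChain x y M)
    (hMinc : (chainWord l M).IsChain (· ≤ ·)) : L = M := by
  refine hL.induction (P := fun x L => (chainWord l L).IsChain (· ≤ ·) → ∀ M,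
      IsSaturatedChain x y M → (chainWord l M).IsChain (· ≤ ·) → L = M)
    (fun _ M hM _ => hM.eq_singleton.symm) (fun a b t hab hb ih hLinc M hM hMinc => ?_)
    hLinc M hM hMinc
  obtain ⟨c, s, rfl, hac, hc⟩ := hM.exists_eq_cons_cons (hab.lt.trans_le hb.le).ne
  have hbc : b = c := by
    rw [← hl.sup_label hab, ← hl.sup_label hac, (hl.isLeast_head_label
      (isSaturatedChain_cons_cons.2 ⟨rfl, hab, hb⟩) hLinc).unique (hl.isLeast_head_label hM hMinc)]
  subst hbc
  rw [chainWord_cons_cons_s14] at hLinc hMinc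
  rw [ih hLinc.tail _ hc hMinc.tail]

lemma lex_lt_of_isChain_le (hl : IsLeastSupLabeling e l) (hL : IsSaturatedChain x y L)
    (hLinc : (chainWord l L).IsChain (· ≤ ·)) (hM : IsSaturatedChain x y M) (hne : M ≠ L) :
    List.Lex (· < ·) (chainWord l L) (chainWord l M) := by
  refine hL.induction (P := fun x L => (chainWord l L).IsChain (· ≤ ·) → ∀ M,
      IsSaturatedChain x y M → M ≠ L → List.Lex (· < ·) (chainWord l L) (chainWord l M))
    (fun _ M hM hne => absurd hM.eq_singleton hne) (fun a b t hab hb ih hLinc M hM hne => ?_)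
    hLinc M hM hne
  obtain ⟨c, s, rfl, hac, hc⟩ := hM.exists_eq_cons_cons (hab.lt.trans_le hb.le).ne
  rw [chainWord_cons_cons_s14, chainWord_cons_cons_s14]
  by_cases hcb : c = b
  · subst hcb
    rw [chainWord_cons_cons_s14] at hLinc
    exact .cons (ih hLinc.tail _ hc fun h => hne (h ▸ rfl))
  · have hleast := hl.isLeast_head_label (isSaturatedChain_cons_cons.2 ⟨rfl, hab, hb⟩) hLinc
    refine .rel (lt_of_le_of_ne (hleast.2 (hl.mem_of_mem_chainWord hM _ List.mem_cons_self))
      fun h => hcb ?_)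
    rw [← hl.sup_label hac, ← h, hl.sup_label hab]

lemma exists_isChain_le [OrderBot α] [WellFoundedLT α] [WellFoundedGT α] [Finite Λ]
    [IsUpperModularLattice α] (hgen : ∀ a : α, SupIrred a → a ∈ range e)
    (hext : ∀ v w, e v < e w → v < w) (hl : IsLeastSupLabeling e l) (hxy : x ≤ y) :
    ∃ L, IsSaturatedChain x y L ∧ (chainWord l L).IsChain (· ≤ ·) := by
  induction x using WellFoundedGT.induction with
  | _ x ih =>
  rcases hxy.eq_or_lt with rfl | hlt
  · exact ⟨[x], isSaturatedChain_singleton.2 ⟨rfl, rfl⟩, List.isChain_nil⟩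
  obtain ⟨z, hz⟩ := exists_isLeast_preimage_Iic_diff_Iic hgen hlt.not_ge
  have hcov := covBy_sup_of_isLeast hgen hext hz
  obtain ⟨L, hL, hLinc⟩ := ih _ hcov.lt (sup_le hxy hz.1.1)
  obtain ⟨t, rfl⟩ := hL.exists_eq_cons
  refine ⟨x :: (x ⊔ e z) :: t, isSaturatedChain_cons_cons.2 ⟨rfl, hcov, hL⟩, ?_⟩
  rw [chainWord_cons_cons_s14, hl.label_sup_eq hxy hz hcov, List.isChain_cons]
  exact ⟨fun w hw => hz.2 (preimage_Iic_diff_Iic_mono hcov.le le_rfl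
    (hl.mem_of_mem_chainWord hL w (List.mem_of_mem_head? hw))), hLinc⟩

end IsLeastSupLabeling

end Labeling

end

/-- In a finite semimodular lattice with join-irreducibles well-ordered compatibly with
the lattice order, labeling each cover x ⋖ y by the least join-irreducible z with
x ⊔ z = y gives an EL-labeling. -/
theorem semimodular_minimal_joinIrreducible_is_ELLabeling {α : Type*} [Lattice α]
    [Fintype α] [BoundedOrder α]
    (hsm : ∀ x y : α, x ⊓ y ⋖ x → y ⋖ x ⊔ y)
    (lo : LinearOrder {a : α // SupIrred a})
    (hext : ∀ x y : {a : α // SupIrred a}, (x : α) < (y : α) → lo.lt x y)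
    (l : α → α → {a : α // SupIrred a})
    (hl : ∀ x y : α, x ⋖ y → (x ⊔ (l x y : α) = y ∧
      ∀ z : {a : α // SupIrred a}, x ⊔ (z : α) = y → lo.le (l x y) z)) :
    IsELLabeling lo.le lo.lt l := by
  let _ := lo
  have : IsUpperModularLattice α := ⟨hsm _ _⟩
  have hl : IsLeastSupLabeling Subtype.val l := hl
  have hgen : ∀ a : α, SupIrred a → a ∈ Set.range (Subtype.val : {a // SupIrred a} → α) :=
    fun a ha => ⟨⟨a, ha⟩, rfl⟩
  intro x y hxy
  obtain ⟨L, hL, hLinc⟩ := hl.exists_isChain_le hgen hext hxy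
  exact ⟨L, hL, hLinc, fun M hM hne => ⟨fun hMinc => hne (hl.eq_of_isChain_le hM hMinc hL hLinc),
    hl.lex_lt_of_isChain_le hL hLinc hM hne⟩⟩
end

section
/- If H is a balanced strongly connected d-uniform hypergraph with a proper d-coloring of its vertices, then the exact transversals of H are exactly the nonempty color classes. -/
/-- An exact transversal of a hypergraph with edge set `E`: a set of vertices meeting
every edge in exactly one vertex. -/
def ExactTransversal {V : Type*} (E : Set (Finset V)) (S : Set V) : Prop :=
  ∀ e ∈ E, ∃! v, v ∈ e ∧ v ∈ S

/-- A hypergraph is strongly connected if any two edges are connected by a finite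
sequence of edges in which consecutive edges have symmetric difference of size two. -/
def StronglyConnectedHG {V : Type*} [DecidableEq V] (E : Set (Finset V)) : Prop :=
  ∀ e ∈ E, ∀ f ∈ E, ∃ (n : ℕ) (g : ℕ → Finset V), g 0 = e ∧ g n = f ∧
    (∀ i ≤ n, g i ∈ E) ∧ ∀ i < n, (symmDiff (g i) (g (i + 1))).card = 2

/-!
Any two edges of a strongly connected hypergraph are joined by a chain of edges in which
consecutive edges `e, f` differ by exchanging a single vertex `x ∈ e \ f` for `y ∈ f \ e`.
In a properly `d`-colored `d`-uniform hypergraph every edge is rainbow, so `x` and `y` have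
the same color, and an exact transversal therefore meets `e` and `f` in vertices of the same
color. Along the chains, all vertices of an exact transversal get one color `i`; as every
vertex lies in an edge, which contains exactly one vertex of color `i`, the transversal is the
whole color class. Conversely a color class meets every rainbow edge exactly once.
-/

section

variable {V ι : Type*}

theorem StronglyConnectedHG.induction [DecidableEq V] {E : Set (Finset V)}
    (hsc : StronglyConnectedHG E) {P : Finset V → Prop}
    (step : ∀ e ∈ E, ∀ f ∈ E, (symmDiff e f).card = 2 → P e → P f)
    {e f : Finset V} (he : e ∈ E) (hf : f ∈ E) (hPe : P e) : P f := by
  obtain ⟨n, g, rfl, rfl, hgE, hg⟩ := hsc e he f hf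
  suffices ∀ i ≤ n, P (g i) from this n le_rfl
  intro i
  induction i with
  | zero => exact fun _ ↦ hPe
  | succ i ih =>
    intro hi
    exact step _ (hgE i (by omega)) _ (hgE _ hi) (hg i hi) (ih (by omega))

theorem Finset.card_sdiff_eq_one_of_card_symmDiff_eq_two [DecidableEq V] {e f : Finset V}
    (hcard : e.card = f.card) (hsd : (symmDiff e f).card = 2) : (f \ e).card = 1 := by
  rw [symmDiff_def, sup_eq_union, card_union_of_disjoint disjoint_sdiff_sdiff,
    card_sdiff_comm hcard] at hsd
  omega

theorem Finset.existsUnique_mem_apply_eq_of_injOn [Fintype ι] {c : V → ι} {e : Finset V}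
    (hinj : Set.InjOn c e) (hcard : e.card = Fintype.card ι) (i : ι) :
    ∃! v, v ∈ e ∧ c v = i := by
  obtain ⟨v, hv, rfl⟩ := surjOn_of_injOn_of_card_le (t := univ) c (fun _ _ ↦ mem_univ _) hinj
    (by rw [card_univ, hcard]) (mem_univ i)
  exact ⟨v, ⟨hv, rfl⟩, fun w hw ↦ hinj hw.1 hv hw.2⟩

theorem apply_eq_of_card_symmDiff_eq_two [DecidableEq V] [Fintype ι] {c : V → ι}
    {e f : Finset V} (hinje : Set.InjOn c e) (hinjf : Set.InjOn c f)
    (hcardf : f.card = Fintype.card ι) (hcard : e.card = f.card)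
    (hsd : (symmDiff e f).card = 2) {S : Set V}
    (hSe : ∃! v, v ∈ e ∧ v ∈ S) (hSf : ∃! v, v ∈ f ∧ v ∈ S)
    {u w : V} (hu : u ∈ e ∧ u ∈ S) (hw : w ∈ f ∧ w ∈ S) : c u = c w := by
  by_cases huf : u ∈ f
  · rw [hSf.unique hw ⟨huf, hu.2⟩]
  -- The vertex `z` of `f` with the color of `u` lies, like `w`, in the singleton `f \ e`.
  have hwe : w ∉ e := fun hwe ↦ huf (hSe.unique hu ⟨hwe, hw.2⟩ ▸ hw.1)
  obtain ⟨z, ⟨hzf, hcz⟩, -⟩ := Finset.existsUnique_mem_apply_eq_of_injOn hinjf hcardf (c u)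
  have hze : z ∉ e := fun hze ↦ huf (hinje hze hu.1 hcz ▸ hzf)
  have hzw : z = w := Finset.card_le_one.mp
    (Finset.card_sdiff_eq_one_of_card_symmDiff_eq_two hcard hsd).le z
    (Finset.mem_sdiff.mpr ⟨hzf, hze⟩) w (Finset.mem_sdiff.mpr ⟨hw.1, hwe⟩)
  rw [← hzw, hcz]

theorem ExactTransversal.apply_eq_of_stronglyConnected [DecidableEq V] [Fintype ι]
    {c : V → ι} {E : Set (Finset V)} (hsc : StronglyConnectedHG E)
    (hinj : ∀ e ∈ E, Set.InjOn c e) (hcard : ∀ e ∈ E, e.card = Fintype.card ι)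
    {S : Set V} (hS : ExactTransversal E S) {e f : Finset V} (he : e ∈ E) (hf : f ∈ E)
    {u w : V} (hu : u ∈ e ∧ u ∈ S) (hw : w ∈ f ∧ w ∈ S) : c u = c w := by
  refine hsc.induction (P := fun f ↦ ∀ w, w ∈ f ∧ w ∈ S → c u = c w) ?_ he hf
    (fun w hw ↦ by rw [(hS e he).unique hu hw]) w hw
  intro e he f hf hsd hPe w hw
  obtain ⟨x, hx, -⟩ := hS e he
  rw [hPe x hx]
  exact apply_eq_of_card_symmDiff_eq_two (hinj e he) (hinj f hf) (hcard f hf)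
    ((hcard e he).trans (hcard f hf).symm) hsd (hS e he) (hS f hf) hx hw

end

/-- In a balanced strongly connected d-uniform hypergraph (whose vertex set is covered
by its edges), the exact transversals are exactly the color classes. -/
theorem exact_transversals_eq_color_classes {V : Type*} [DecidableEq V] (d : ℕ)
    (E : Set (Finset V)) (hunif : ∀ e ∈ E, e.card = d)
    (hsc : StronglyConnectedHG E) (c : V → Fin d)
    (hproper : ∀ e ∈ E, ∀ u ∈ e, ∀ v ∈ e, u ≠ v → c u ≠ c v)
    (hcover : ∀ v : V, ∃ e ∈ E, v ∈ e) (hE : E.Nonempty) :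
    ∀ S : Set V, ExactTransversal E S ↔ ∃ i : Fin d, S = {v | c v = i} := by
  have hinj : ∀ e ∈ E, Set.InjOn c e := fun e he u hu v hv huv ↦
    not_imp_not.mp (hproper e he u hu v hv) huv
  have hcard : ∀ e ∈ E, e.card = Fintype.card (Fin d) := by simpa using hunif
  intro S
  refine ⟨fun hS ↦ ?_, ?_⟩
  · obtain ⟨e₀, he₀⟩ := hE
    obtain ⟨v₀, hv₀, -⟩ := hS e₀ he₀
    refine ⟨c v₀, Set.ext fun v ↦ ?_⟩
    obtain ⟨f, hf, hvf⟩ := hcover v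
    obtain ⟨w, hw, -⟩ := hS f hf
    have hcw : c v₀ = c w := hS.apply_eq_of_stronglyConnected hsc hinj hcard he₀ hf hv₀ hw
    refine ⟨fun hvS ↦ hS.apply_eq_of_stronglyConnected hsc hinj hcard hf he₀ ⟨hvf, hvS⟩ hv₀,
      fun hcv ↦ ?_⟩
    rw [hinj f hf hvf hw.1 (hcv.trans hcw)]
    exact hw.2
  · rintro ⟨i, rfl⟩ e he
    exact Finset.existsUnique_mem_apply_eq_of_injOn (hinj e he) (hcard e he) i
end
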